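/- arXiv:1412.4170 — 7 statements merged into one kernel-verified Lean document; each statement's English description precedes it below -/
import Mathlib

section
/- Let X_G ∈ ℝ^{n×|G|} and Z_G ∈ ℝ^{n×|G|} with rank(Z_G^T X_G) = |G|, and let P_G be the orthogonal projection onto the range of Z_G. Then (P_G X_G)^† P_G = (Z_G^T X_G)^{-1} Z_G^T, where † denotes the Moore–Penrose pseudoinverse. -/
open Matrix

/-- `B` is the Moore–Penrose pseudoinverse of `A` (the four Penrose conditions). -/
def IsMoorePenrose {n m : ℕ} (A : Matrix (Fin n) (Fin m) ℝ)
    (B : Matrix (Fin m) (Fin n) ℝ) : Prop :=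
  A * B * A = A ∧ B * A * B = B ∧ (A * B)ᵀ = A * B ∧ (B * A)ᵀ = B * A

/-- `P` is the orthogonal projection onto the column space of `Z`. -/
def IsOrthProjOnto {n m : ℕ} (P : Matrix (Fin n) (Fin n) ℝ)
    (Z : Matrix (Fin n) (Fin m) ℝ) : Prop :=
  Pᵀ = P ∧ P * P = P ∧
    LinearMap.range P.mulVecLin = LinearMap.range Z.mulVecLin

/-- If the column space of `A` is contained in that of `Z`, then `A` factors as `Z * W`. -/
lemma exists_factor {n m l : ℕ} (A : Matrix (Fin n) (Fin l) ℝ) (Z : Matrix (Fin n) (Fin m) ℝ)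
    (h : LinearMap.range A.mulVecLin ≤ LinearMap.range Z.mulVecLin) :
    ∃ W : Matrix (Fin m) (Fin l) ℝ, Z * W = A := by
  have hcol : ∀ j : Fin l, ∃ w : Fin m → ℝ, Z.mulVec w = A.mulVec (Pi.single j 1) := by
    intro j
    obtain ⟨w, hw⟩ := h ⟨Pi.single j 1, rfl⟩
    exact ⟨w, hw⟩
  refine ⟨Matrix.of fun i j => (hcol j).choose i, ?_⟩
  ext i j
  have hw := congrFun (hcol j).choose_spec i
  have h1 : (Z * Matrix.of fun i j => (hcol j).choose i) i j
      = Z.mulVec ((hcol j).choose) i := by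
    simp [Matrix.mul_apply, Matrix.mulVec, dotProduct]
  rw [h1, hw]
  simp

/-- if `rank (Z_Gᵀ X_G) = |G|` and `P_G` is the orthogonal projection onto
the range of `Z_G`, then `(P_G X_G)† P_G = (Z_Gᵀ X_G)⁻¹ Z_Gᵀ`. -/
theorem stmt1 {n k : ℕ} (XG ZG : Matrix (Fin n) (Fin k) ℝ)
    (hrank : (ZGᵀ * XG).rank = k)
    (P : Matrix (Fin n) (Fin n) ℝ) (hP : IsOrthProjOnto P ZG)
    (B : Matrix (Fin k) (Fin n) ℝ) (hB : IsMoorePenrose (P * XG) B) :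
    B * P = (ZGᵀ * XG)⁻¹ * ZGᵀ := by
  obtain ⟨hPt, hPP, hPZ⟩ := hP
  obtain ⟨h1, h2, h3, h4⟩ := hB
  set M := ZGᵀ * XG with hM
  -- M is invertible
  have hMunit : IsUnit M := by
    rw [← Matrix.mulVec_surjective_iff_isUnit]
    have hrange : LinearMap.range M.mulVecLin = ⊤ := by
      apply Submodule.eq_top_of_finrank_eq
      rw [← Matrix.rank, hrank, Module.finrank_fintype_fun_eq_card, Fintype.card_fin]
    intro v
    obtain ⟨w, hw⟩ := hrange ▸ (Submodule.mem_top : v ∈ (⊤ : Submodule ℝ (Fin k → ℝ)))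
    exact ⟨w, hw⟩
  have hMdet : IsUnit M.det := (Matrix.isUnit_iff_isUnit_det M).mp hMunit
  have hMI : M * M⁻¹ = 1 := Matrix.mul_nonsing_inv M hMdet
  have hIM : M⁻¹ * M = 1 := Matrix.nonsing_inv_mul M hMdet
  -- P * ZG = ZG
  have hPZG : P * ZG = ZG := by
    obtain ⟨V, hV⟩ := exists_factor ZG P (le_of_eq hPZ.symm)
    calc P * ZG = P * (P * V) := by rw [hV]
    _ = (P * P) * V := by rw [Matrix.mul_assoc]
    _ = P * V := by rw [hPP]
    _ = ZG := hV
  -- ZGᵀ * P = ZGᵀ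
  have hZtP : ZGᵀ * P = ZGᵀ := by
    have := congrArg Matrix.transpose hPZG
    rwa [Matrix.transpose_mul, hPt] at this
  -- P factors through ZG
  obtain ⟨W, hW⟩ := exists_factor P ZG (le_of_eq hPZ)
  set C : Matrix (Fin k) (Fin n) ℝ := M⁻¹ * ZGᵀ with hC
  set A : Matrix (Fin n) (Fin k) ℝ := P * XG with hA
  -- C * A = 1
  have hCA : C * A = 1 := by
    rw [hC, hA, Matrix.mul_assoc, ← Matrix.mul_assoc ZGᵀ P XG, hZtP, ← hM, hIM]
  -- (A * C)ᵀ = P, using XGᵀ * ZG = Mᵀ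
  have hXtZ : XGᵀ * ZG = Mᵀ := by rw [hM, Matrix.transpose_mul, Matrix.transpose_transpose]
  have key : ZG * ((M⁻¹)ᵀ * (XGᵀ * P)) = P := by
    calc ZG * ((M⁻¹)ᵀ * (XGᵀ * P)) = ZG * ((M⁻¹)ᵀ * (Mᵀ * W)) := by
          rw [← hW, ← Matrix.mul_assoc XGᵀ, hXtZ]
    _ = ZG * (((M⁻¹)ᵀ * Mᵀ) * W) := by rw [Matrix.mul_assoc]
    _ = ZG * W := by rw [← Matrix.transpose_mul, hMI, Matrix.transpose_one, Matrix.one_mul]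
    _ = P := hW
  have hACt : (A * C)ᵀ = P := by
    calc (A * C)ᵀ = ZG * ((M⁻¹)ᵀ * (XGᵀ * P)) := by
          rw [hA, hC]
          simp only [Matrix.transpose_mul, Matrix.transpose_transpose, hPt, Matrix.mul_assoc]
    _ = P := key
  have hAC : A * C = P := by
    have := congrArg Matrix.transpose hACt
    rwa [Matrix.transpose_transpose, hPt] at this
  -- B * A = 1
  have hBA : B * A = 1 := by
    calc B * A = (C * A) * (B * A) := by rw [hCA, Matrix.one_mul]
    _ = C * (A * B * A) := by simp only [Matrix.mul_assoc]
    _ = C * A := by rw [h1]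
    _ = 1 := hCA
  -- conclude
  calc B * P = B * (A * C) := by rw [hAC]
  _ = (B * A) * C := by rw [← Matrix.mul_assoc]
  _ = C := by rw [hBA, Matrix.one_mul]
end

section
/- Suppose y = X β* + ε with X ∈ ℝ^{n×p}, and let β̂^{(init)} ∈ ℝ^p be arbitrary. Let G ⊆ {1,…,p}, Z_G ∈ ℝ^{n×|G|} with rank(Z_G^T X_G) = |G|, and P_G the orthogonal projection onto the range of Z_G. Define β̂_G = β̂_G^{(init)} + (Z_G^T X_G)^{-1} Z_G^T (y − X β̂^{(init)}). Then β̂_G − β*_G = (P_G X_G)^† (P_G ε − Rem_G), where Rem_G = P_G X_{-G} (β̂^{(init)} − β*)_{-G} and X_{-G} is X with the columns in G removed. -/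
open Matrix

/-- error decomposition for the de-biased group estimator.  The group `G` is
encoded by an injection `g : Fin k → Fin p` and its complement by `g' : Fin k' → Fin p`;
`X_G = X.submatrix id g`, `X_{-G} = X.submatrix id g'`.  With
`β̂_G = β̂_G^{(init)} + (Z_Gᵀ X_G)⁻¹ Z_Gᵀ (y − X β̂^{(init)})` one has
`β̂_G − β*_G = (P_G X_G)† (P_G ε − Rem_G)` where
`Rem_G = P_G X_{-G} (β̂^{(init)} − β*)_{-G}`. -/
theorem stmt2 {n p k k' : ℕ} (X : Matrix (Fin n) (Fin p) ℝ)
    (g : Fin k → Fin p) (g' : Fin k' → Fin p)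
    (hg : Function.Injective g) (hg' : Function.Injective g')
    (hdisj : Disjoint (Set.range g) (Set.range g'))
    (hcover : Set.range g ∪ Set.range g' = Set.univ)
    (βstar βinit : Fin p → ℝ) (ε y : Fin n → ℝ)
    (hy : y = X *ᵥ βstar + ε)
    (Z : Matrix (Fin n) (Fin k) ℝ)
    (hrank : (Zᵀ * X.submatrix id g).rank = k)
    (P : Matrix (Fin n) (Fin n) ℝ) (hP : IsOrthProjOnto P Z)
    (B : Matrix (Fin k) (Fin n) ℝ)
    (hB : IsMoorePenrose (P * X.submatrix id g) B) :
    ((fun i => βinit (g i)) + (Zᵀ * X.submatrix id g)⁻¹ *ᵥ (Zᵀ *ᵥ (y - X *ᵥ βinit)))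
        - (fun i => βstar (g i))
      = B *ᵥ (P *ᵥ ε
          - P *ᵥ (X.submatrix id g' *ᵥ fun i => βinit (g' i) - βstar (g' i))) := by
  obtain ⟨hPsym, hPidem, hPrange⟩ := hP
  obtain ⟨hB1, hB2, hB3, hB4⟩ := hB
  set XG := X.submatrix id g with hXGdef
  set XG' := X.submatrix id g' with hXGdef'
  set M := P * XG with hMdef
  set A := Zᵀ * XG with hAdef
  set C := A⁻¹ * Zᵀ with hCdef
  -- A is invertible
  have hunitA : IsUnit A := by
    rw [← Matrix.mulVec_surjective_iff_isUnit]
    have htop : LinearMap.range A.mulVecLin = ⊤ := by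
      apply Submodule.eq_top_of_finrank_eq
      rw [← Matrix.rank, hrank, Module.finrank_fintype_fun_eq_card, Fintype.card_fin]
    intro v
    have : v ∈ LinearMap.range A.mulVecLin := htop ▸ Submodule.mem_top
    exact this
  have hAinv : A⁻¹ * A = 1 := Matrix.nonsing_inv_mul A (Matrix.isUnit_iff_isUnit_det A |>.mp hunitA)
  -- P Z = Z
  have hPZ : P * Z = Z := by
    ext i j
    have hmem : Z *ᵥ Pi.single j 1 ∈ LinearMap.range P.mulVecLin := by
      rw [hPrange]; exact ⟨Pi.single j 1, rfl⟩
    obtain ⟨u, hu⟩ := hmem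
    have : P *ᵥ (Z *ᵥ Pi.single j 1) = Z *ᵥ Pi.single j 1 := by
      rw [← hu]
      show P *ᵥ (P *ᵥ u) = P *ᵥ u
      rw [Matrix.mulVec_mulVec, hPidem]
    have h2 := congrFun this i
    rw [Matrix.mulVec_mulVec] at h2
    simpa [Matrix.mulVec_single, Matrix.mulVec_mulVec] using h2
  have hZtP : Zᵀ * P = Zᵀ := by
    have := congrArg Matrix.transpose hPZ
    rwa [Matrix.transpose_mul, hPsym] at this
  -- C * M = 1
  have hCM : C * M = 1 := by
    rw [hCdef, hMdef, Matrix.mul_assoc, ← Matrix.mul_assoc Zᵀ P XG, hZtP, ← hAdef, hAinv]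
  -- C * P = C
  have hCP : C * P = C := by rw [hCdef, Matrix.mul_assoc, hZtP]
  -- B * M = 1
  have hBM : B * M = 1 := by
    have h := congrArg (fun W => C * W) hB1
    simp only [← Matrix.mul_assoc] at h
    rw [hCM, Matrix.one_mul] at h
    exact h
  -- M is injective, rank M = k
  have hMleft : ∀ x, B *ᵥ (M *ᵥ x) = x := by
    intro x; rw [Matrix.mulVec_mulVec, hBM, Matrix.one_mulVec]
  have hMinj : Function.Injective M.mulVecLin := by
    intro x y hxy
    have : B *ᵥ (M *ᵥ x) = B *ᵥ (M *ᵥ y) := by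
      show B *ᵥ M.mulVecLin x = B *ᵥ M.mulVecLin y
      rw [hxy]
    rwa [hMleft, hMleft] at this
  -- range M = range P
  have hMle : LinearMap.range M.mulVecLin ≤ LinearMap.range P.mulVecLin := by
    rw [hMdef, Matrix.mulVecLin_mul]
    exact LinearMap.range_comp_le_range _ _
  have hrangeEq : LinearMap.range M.mulVecLin = LinearMap.range P.mulVecLin := by
    apply Submodule.eq_of_le_of_finrank_le hMle
    have h1 : Module.finrank ℝ (LinearMap.range M.mulVecLin) = k := by
      rw [LinearMap.finrank_range_of_inj hMinj, Module.finrank_fintype_fun_eq_card,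
        Fintype.card_fin]
    have h2 : Module.finrank ℝ (LinearMap.range P.mulVecLin) ≤ k := by
      rw [hPrange]
      have := Matrix.rank_le_card_width Z
      rw [Fintype.card_fin] at this
      exact this
    omega
  -- key identity: C *ᵥ v = B *ᵥ (P *ᵥ v)
  have key : ∀ v, C *ᵥ v = B *ᵥ (P *ᵥ v) := by
    intro v
    have hmem : P *ᵥ v ∈ LinearMap.range M.mulVecLin := by
      rw [hrangeEq]; exact ⟨v, rfl⟩
    obtain ⟨w, hw⟩ := hmem
    have hw' : M *ᵥ w = P *ᵥ v := hw
    have hCv : C *ᵥ v = w := by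
      calc C *ᵥ v = (C * P) *ᵥ v := by rw [hCP]
        _ = C *ᵥ (P *ᵥ v) := by rw [Matrix.mulVec_mulVec]
        _ = C *ᵥ (M *ᵥ w) := by rw [hw']
        _ = (C * M) *ᵥ w := by rw [Matrix.mulVec_mulVec]
        _ = w := by rw [hCM, Matrix.one_mulVec]
    rw [hCv, ← hw', hMleft]
  -- the sum splitting
  have hbij : Function.Bijective (Sum.elim g g') := by
    constructor
    · apply Function.Injective.sumElim hg hg'
      intro a b hab
      exact Set.disjoint_left.mp hdisj ⟨a, hab⟩ ⟨b, rfl⟩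
    · intro j
      have : j ∈ Set.range g ∪ Set.range g' := hcover ▸ Set.mem_univ j
      rcases this with ⟨a, ha⟩ | ⟨a, ha⟩
      exacts [⟨Sum.inl a, ha⟩, ⟨Sum.inr a, ha⟩]
  have hsplit : ∀ δ : Fin p → ℝ,
      X *ᵥ δ = XG *ᵥ (fun i => δ (g i)) + XG' *ᵥ (fun i => δ (g' i)) := by
    intro δ
    funext i
    have := Equiv.sum_comp (Equiv.ofBijective _ hbij) (fun j => X i j * δ j)
    simp only [Pi.add_apply, hXGdef, hXGdef', Matrix.mulVec, dotProduct,
      Matrix.submatrix_apply, id]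
    rw [← this, Fintype.sum_sum_type]
    rfl
  -- main computation
  set δ : Fin p → ℝ := βstar - βinit with hδdef
  have hyx : y - X *ᵥ βinit = X *ᵥ δ + ε := by
    rw [hy, hδdef, Matrix.mulVec_sub]
    abel
  have hneg : (fun i => βinit (g' i) - βstar (g' i)) = -(fun i => δ (g' i)) := by
    funext i; simp [hδdef]
  have hRHSarg : P *ᵥ ε - P *ᵥ (XG' *ᵥ fun i => βinit (g' i) - βstar (g' i))
      = P *ᵥ (XG' *ᵥ (fun i => δ (g' i)) + ε) := by
    rw [← Matrix.mulVec_sub, hneg, Matrix.mulVec_neg, sub_neg_eq_add, add_comm]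
  rw [hRHSarg, ← key]
  rw [hyx, hsplit δ]
  have hfirst : A⁻¹ *ᵥ (Zᵀ *ᵥ (XG *ᵥ (fun i => δ (g i)) + XG' *ᵥ (fun i => δ (g' i)) + ε))
      = (fun i => δ (g i)) + C *ᵥ (XG' *ᵥ (fun i => δ (g' i)) + ε) := by
    rw [hCdef]
    simp only [Matrix.mulVec_add, Matrix.mulVec_mulVec]
    rw [← hAdef, hAinv, Matrix.one_mulVec, ← Matrix.mul_assoc]
    abel
  rw [hfirst]
  funext i
  simp [hδdef]
  ring
end

section
/- Let Σ ∈ ℝ^{p×p} be symmetric positive definite, B₁ ∈ ℝ^{p×r₁}, B₂ ∈ ℝ^{p×r₂} with rank(B_k) = r_k. Define Ω₁₂ = ((B₁^T Σ B₁)^†)^{1/2} B₁^T Σ B₂ ((B₂^T Σ B₂)^†)^{1/2} and let λ₁ be its largest singular value. Then λ₁ ≤ 1, and λ₁ < 1 if and only if rank([B₁ B₂]) = r₁ + r₂. -/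
open Matrix

/-- `R` is the inverse of the symmetric positive-definite square root of `M`,
i.e. `R` is symmetric positive definite and `R * M * R = 1`.  (For `M` invertible this
coincides with `((M)†)^{1/2}` where `†` is the Moore–Penrose pseudoinverse.) -/
def IsInvSqrtOf {k : ℕ} (R M : Matrix (Fin k) (Fin k) ℝ) : Prop :=
  Rᵀ = R ∧ R.PosDef ∧ R * M * R = 1

/-- Spectral norm (ℓ₂→ℓ₂ operator norm) of a real matrix; equals the largest
singular value. -/
noncomputable def specNorm {m n : ℕ} (A : Matrix (Fin m) (Fin n) ℝ) : ℝ :=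
  ‖LinearMap.toContinuousLinearMap (Matrix.toEuclideanLin A)‖

namespace Stmt5Aux

local notation "⟪" x ", " y "⟫" => @inner ℝ _ _ x y

lemma euclin_mul {m n k : Type*} [Fintype m] [Fintype n] [Fintype k]
    [DecidableEq n] [DecidableEq k]
    (A : Matrix m n ℝ) (B : Matrix n k ℝ) :
    toEuclideanLin (A * B) = (toEuclideanLin A).comp (toEuclideanLin B) := by
  ext x; simp [toEuclideanLin_apply, mulVec_mulVec]

lemma euclin_mul_apply {m n k : Type*} [Fintype m] [Fintype n] [Fintype k]
    [DecidableEq n] [DecidableEq k]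
    (A : Matrix m n ℝ) (B : Matrix n k ℝ) (x : EuclideanSpace ℝ k) :
    toEuclideanLin (A * B) x = toEuclideanLin A (toEuclideanLin B x) := by
  rw [euclin_mul]; rfl

lemma euclin_one {n : Type*} [Fintype n] [DecidableEq n] :
    toEuclideanLin (1 : Matrix n n ℝ) = LinearMap.id := by
  ext x; simp [toEuclideanLin_apply]

lemma euclin_transpose {m n : ℕ} (A : Matrix (Fin m) (Fin n) ℝ) :
    toEuclideanLin Aᵀ = LinearMap.adjoint (toEuclideanLin A) := by
  rw [← Matrix.toEuclideanLin_conjTranspose_eq_adjoint, conjTranspose_eq_transpose_of_trivial]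

lemma norm_eucl_of_orth {p r : ℕ} {U : Matrix (Fin p) (Fin r) ℝ} (hU : Uᵀ * U = 1)
    (x : EuclideanSpace ℝ (Fin r)) : ‖toEuclideanLin U x‖ = ‖x‖ := by
  have h : ⟪toEuclideanLin U x, toEuclideanLin U x⟫ = ⟪x, x⟫ := by
    rw [← LinearMap.adjoint_inner_left, ← euclin_transpose, ← euclin_mul_apply, hU, euclin_one]
    rfl
  rw [real_inner_self_eq_norm_sq, real_inner_self_eq_norm_sq] at h
  calc ‖toEuclideanLin U x‖ = Real.sqrt (‖toEuclideanLin U x‖ ^ 2) :=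
        (Real.sqrt_sq (norm_nonneg _)).symm
    _ = Real.sqrt (‖x‖ ^ 2) := by rw [h]
    _ = ‖x‖ := Real.sqrt_sq (norm_nonneg _)

lemma norm_transpose_le {p r : ℕ} {U : Matrix (Fin p) (Fin r) ℝ} (hU : Uᵀ * U = 1)
    (y : EuclideanSpace ℝ (Fin p)) : ‖toEuclideanLin Uᵀ y‖ ≤ ‖y‖ := by
  set z := toEuclideanLin Uᵀ y with hz
  have h1 : ⟪z, z⟫ = ⟪y, toEuclideanLin U z⟫ := by
    nth_rewrite 1 [hz]
    rw [euclin_transpose, LinearMap.adjoint_inner_left]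
  have h2 : ⟪y, toEuclideanLin U z⟫ ≤ ‖y‖ * ‖toEuclideanLin U z‖ := real_inner_le_norm _ _
  rw [norm_eucl_of_orth hU] at h2
  rw [real_inner_self_eq_norm_sq] at h1
  rcases eq_or_lt_of_le (norm_nonneg z) with h0 | h0
  · rw [← h0]; exact norm_nonneg y
  · have : ‖z‖ * ‖z‖ ≤ ‖y‖ * ‖z‖ := by nlinarith
    exact le_of_mul_le_mul_right this h0

lemma mem_range_of_norm_eq {p r : ℕ} {U : Matrix (Fin p) (Fin r) ℝ} (hU : Uᵀ * U = 1)
    {v : EuclideanSpace ℝ (Fin p)} (hv : ‖toEuclideanLin Uᵀ v‖ = ‖v‖) :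
    v ∈ LinearMap.range (toEuclideanLin U) := by
  set y := toEuclideanLin Uᵀ v with hy
  set w := toEuclideanLin U y with hw
  have hwv : ⟪w, v⟫ = ‖v‖ ^ 2 := by
    rw [hw, real_inner_comm]
    have : ⟪v, toEuclideanLin U y⟫ = ⟪toEuclideanLin Uᵀ v, y⟫ := by
      rw [euclin_transpose, LinearMap.adjoint_inner_left]
    rw [this, ← hy, real_inner_self_eq_norm_sq, hv]
  have hwn : ‖w‖ = ‖v‖ := by rw [hw, norm_eucl_of_orth hU]; exact hv
  have hsub : ‖v - w‖ ^ 2 = 0 := by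
    rw [norm_sub_sq_real, real_inner_comm, hwv, hwn]; ring
  have hvw : v = w := by
    have h0 := pow_eq_zero_iff (n := 2) (by norm_num) |>.mp hsub
    rw [norm_eq_zero, sub_eq_zero] at h0
    exact h0
  exact hvw ▸ ⟨y, rfl⟩

lemma exists_norm_apply_eq {E F : Type*} [NormedAddCommGroup E] [NormedSpace ℝ E]
    [NormedAddCommGroup F] [NormedSpace ℝ F] [FiniteDimensional ℝ E]
    (f : E →L[ℝ] F) (hf : f ≠ 0) : ∃ x : E, ‖x‖ = 1 ∧ ‖f x‖ = ‖f‖ := by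
  obtain ⟨y, hy⟩ : ∃ y, f y ≠ 0 := by
    by_contra h; push_neg at h; exact hf (ContinuousLinearMap.ext fun y => by simp [h y])
  have hy0 : y ≠ 0 := fun h => hy (by simp [h])
  have : Nontrivial E := nontrivial_of_ne y 0 hy0
  obtain ⟨x₀, hx₀, hmax⟩ := (isCompact_sphere (0 : E) 1).exists_isMaxOn
    (NormedSpace.sphere_nonempty.mpr zero_le_one)
    ((continuous_norm.comp f.continuous).continuousOn)
  have hx₀n : ‖x₀‖ = 1 := by simpa using hx₀
  refine ⟨x₀, hx₀n, le_antisymm (by simpa [hx₀n] using f.le_opNorm x₀) ?_⟩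
  refine f.opNorm_le_bound (norm_nonneg _) fun x => ?_
  rcases eq_or_ne x 0 with rfl | hx
  · simp
  · have hxs : (‖x‖⁻¹ • x) ∈ Metric.sphere (0 : E) 1 := by
      simp [norm_smul, abs_of_nonneg (inv_nonneg.mpr (norm_nonneg x)),
        inv_mul_cancel₀ (norm_ne_zero_iff.mpr hx)]
    have hmx := hmax hxs
    have hb : ‖x‖⁻¹ * ‖f x‖ ≤ ‖f x₀‖ := by
      have : ‖f (‖x‖⁻¹ • x)‖ ≤ ‖f x₀‖ := hmx
      rwa [_root_.map_smul, norm_smul, Real.norm_eq_abs,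
        abs_of_nonneg (inv_nonneg.mpr (norm_nonneg x))] at this
    have hxpos : (0 : ℝ) < ‖x‖ := norm_pos_iff.mpr hx
    calc ‖f x‖ = ‖x‖ * (‖x‖⁻¹ * ‖f x‖) := by field_simp
    _ ≤ ‖x‖ * ‖f x₀‖ := mul_le_mul_of_nonneg_left hb (le_of_lt hxpos)
    _ = ‖f x₀‖ * ‖x‖ := mul_comm _ _

lemma key {p r₁ r₂ : ℕ} (U₁ : Matrix (Fin p) (Fin r₁) ℝ) (U₂ : Matrix (Fin p) (Fin r₂) ℝ)
    (h1 : U₁ᵀ * U₁ = 1) (h2 : U₂ᵀ * U₂ = 1) :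
    specNorm (U₁ᵀ * U₂) ≤ 1 ∧ (specNorm (U₁ᵀ * U₂) < 1 ↔
      LinearMap.range (toEuclideanLin U₁) ⊓ LinearMap.range (toEuclideanLin U₂) = ⊥) := by
  set f := LinearMap.toContinuousLinearMap (toEuclideanLin (U₁ᵀ * U₂)) with hfdef
  have happ : ∀ x, f x = toEuclideanLin U₁ᵀ (toEuclideanLin U₂ x) := fun x => by
    show toEuclideanLin (U₁ᵀ * U₂) x = _
    rw [euclin_mul_apply]
  have hle : ‖f‖ ≤ 1 := by
    refine f.opNorm_le_bound zero_le_one fun x => ?_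
    rw [happ, one_mul]
    exact (norm_transpose_le h1 _).trans (le_of_eq (norm_eucl_of_orth h2 x))
  have hsn : specNorm (U₁ᵀ * U₂) = ‖f‖ := rfl
  rw [hsn]
  refine ⟨hle, ?_, ?_⟩
  · intro hlt
    rw [Submodule.eq_bot_iff]
    rintro v ⟨⟨a, ha⟩, b, hb⟩
    by_contra hv0
    have hfb : f b = a := by
      rw [happ, hb, ← ha, ← euclin_mul_apply, h1, euclin_one]; rfl
    have hav : ‖a‖ = ‖v‖ := by rw [← ha, norm_eucl_of_orth h1]
    have hbv : ‖b‖ = ‖v‖ := by rw [← hb, norm_eucl_of_orth h2]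
    have hvpos : 0 < ‖v‖ := norm_pos_iff.mpr hv0
    have hineq : ‖v‖ ≤ ‖f‖ * ‖v‖ := by
      calc ‖v‖ = ‖f b‖ := by rw [hfb, hav]
      _ ≤ ‖f‖ * ‖b‖ := f.le_opNorm b
      _ = ‖f‖ * ‖v‖ := by rw [hbv]
    nlinarith
  · intro hbot
    rcases lt_or_eq_of_le hle with h | h
    · exact h
    exfalso
    have hf0 : f ≠ 0 := by
      intro h0; rw [h0] at h; simp at h
    obtain ⟨x, hx1, hfx⟩ := exists_norm_apply_eq f hf0
    set v := toEuclideanLin U₂ x with hv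
    have hvn : ‖v‖ = 1 := by rw [hv, norm_eucl_of_orth h2, hx1]
    have hUv : ‖toEuclideanLin U₁ᵀ v‖ = ‖v‖ := by
      rw [hvn, ← happ, hfx, ← h]
    have hmem : v ∈ LinearMap.range (toEuclideanLin U₁) ⊓ LinearMap.range (toEuclideanLin U₂) :=
      Submodule.mem_inf.mpr ⟨mem_range_of_norm_eq h1 hUv, ⟨x, rfl⟩⟩
    rw [hbot, Submodule.mem_bot] at hmem
    rw [hmem, norm_zero] at hvn
    exact zero_ne_one hvn

lemma rank_eucl {m n : Type*} [Fintype m] [Fintype n] [DecidableEq n] (A : Matrix m n ℝ) :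
    A.rank = Module.finrank ℝ (LinearMap.range (toEuclideanLin A)) := by
  rw [A.rank_eq_finrank_range_toLin (PiLp.basisFun 2 ℝ m) (PiLp.basisFun 2 ℝ n)]
  rfl

lemma fromColumns_eucl {p r₁ r₂ : ℕ} (B₁ : Matrix (Fin p) (Fin r₁) ℝ)
    (B₂ : Matrix (Fin p) (Fin r₂) ℝ) (a : EuclideanSpace ℝ (Fin r₁))
    (b : EuclideanSpace ℝ (Fin r₂)) :
    toEuclideanLin (fromCols B₁ B₂) ((WithLp.equiv 2 _).symm
        (Sum.elim ((WithLp.equiv 2 _) a) ((WithLp.equiv 2 _) b)))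
      = toEuclideanLin B₁ a + toEuclideanLin B₂ b := by
  apply (WithLp.equiv 2 ((Fin p) → ℝ)).injective
  simp [fromCols_mulVec_sumElim]

lemma range_fromColumns {p r₁ r₂ : ℕ} (B₁ : Matrix (Fin p) (Fin r₁) ℝ)
    (B₂ : Matrix (Fin p) (Fin r₂) ℝ) :
    LinearMap.range (toEuclideanLin (fromCols B₁ B₂)) =
      LinearMap.range (toEuclideanLin B₁) ⊔ LinearMap.range (toEuclideanLin B₂) := by
  apply le_antisymm
  · rintro x ⟨c, rfl⟩
    set a : EuclideanSpace ℝ (Fin r₁) :=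
      (WithLp.equiv 2 _).symm (fun i => (WithLp.equiv 2 _) c (Sum.inl i)) with hadef
    set b : EuclideanSpace ℝ (Fin r₂) :=
      (WithLp.equiv 2 _).symm (fun j => (WithLp.equiv 2 _) c (Sum.inr j)) with hbdef
    have hc : c = (WithLp.equiv 2 _).symm
        (Sum.elim ((WithLp.equiv 2 _) a) ((WithLp.equiv 2 _) b)) := by
      apply (WithLp.equiv 2 _).injective
      rw [Equiv.apply_symm_apply]
      funext i
      rcases i with i | j <;> simp [hadef, hbdef]
    rw [hc, fromColumns_eucl]
    exact Submodule.add_mem_sup ⟨a, rfl⟩ ⟨b, rfl⟩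
  · rw [sup_le_iff]
    constructor
    · rintro x ⟨a, rfl⟩
      refine ⟨(WithLp.equiv 2 _).symm (Sum.elim ((WithLp.equiv 2 _) a)
        ((WithLp.equiv 2 _) (0 : EuclideanSpace ℝ (Fin r₂)))), ?_⟩
      rw [fromColumns_eucl]
      simp
    · rintro x ⟨b, rfl⟩
      refine ⟨(WithLp.equiv 2 _).symm (Sum.elim ((WithLp.equiv 2 _)
        (0 : EuclideanSpace ℝ (Fin r₁))) ((WithLp.equiv 2 _) b)), ?_⟩
      rw [fromColumns_eucl]
      simp

lemma eucl_surj {n : ℕ} {M : Matrix (Fin n) (Fin n) ℝ} (h : IsUnit M.det) :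
    LinearMap.range (toEuclideanLin M) = ⊤ := by
  rw [LinearMap.range_eq_top]
  intro x
  refine ⟨toEuclideanLin M⁻¹ x, ?_⟩
  rw [← euclin_mul_apply, mul_nonsing_inv M h, euclin_one]
  rfl

lemma eucl_inj {n : ℕ} {M : Matrix (Fin n) (Fin n) ℝ} (h : IsUnit M.det) :
    Function.Injective (toEuclideanLin M) := by
  intro a b hab
  have key : ∀ y, toEuclideanLin M⁻¹ (toEuclideanLin M y) = y := fun y => by
    rw [← euclin_mul_apply, nonsing_inv_mul M h, euclin_one]; rfl
  rw [← key a, ← key b, hab]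

end Stmt5Aux

/-- the largest singular value `λ₁ = ‖Ω₁₂‖_S` of
`Ω₁₂ = ((B₁ᵀΣB₁)†)^{1/2} B₁ᵀ Σ B₂ ((B₂ᵀΣB₂)†)^{1/2}` satisfies `λ₁ ≤ 1`, and `λ₁ < 1`
iff `rank [B₁ B₂] = r₁ + r₂`. -/
theorem stmt5 {p r₁ r₂ : ℕ} (S : Matrix (Fin p) (Fin p) ℝ)
    (hSsymm : Sᵀ = S) (hS : S.PosDef)
    (B₁ : Matrix (Fin p) (Fin r₁) ℝ) (B₂ : Matrix (Fin p) (Fin r₂) ℝ)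
    (h₁ : B₁.rank = r₁) (h₂ : B₂.rank = r₂)
    (R₁ : Matrix (Fin r₁) (Fin r₁) ℝ) (R₂ : Matrix (Fin r₂) (Fin r₂) ℝ)
    (hR₁ : IsInvSqrtOf R₁ (B₁ᵀ * S * B₁)) (hR₂ : IsInvSqrtOf R₂ (B₂ᵀ * S * B₂)) :
    specNorm (R₁ * (B₁ᵀ * S * B₂) * R₂) ≤ 1 ∧
      (specNorm (R₁ * (B₁ᵀ * S * B₂) * R₂) < 1 ↔
        (Matrix.fromCols B₁ B₂).rank = r₁ + r₂) := by
  classical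
  obtain ⟨hR₁t, hR₁pd, hR₁e⟩ := hR₁
  obtain ⟨hR₂t, hR₂pd, hR₂e⟩ := hR₂
  obtain ⟨T, hT2, hTt⟩ : ∃ T : Matrix (Fin p) (Fin p) ℝ, T * T = S ∧ Tᵀ = T := by
    open scoped MatrixOrder in
    refine ⟨CFC.sqrt S, CFC.sqrt_mul_sqrt_self S hS.posSemidef.nonneg, ?_⟩
    have := (CFC.sqrt_nonneg S).posSemidef.1
    rwa [Matrix.IsHermitian, conjTranspose_eq_transpose_of_trivial] at this
  have hTdetU : IsUnit T.det := by
    have hSdet : IsUnit S.det := hS.det_pos.ne'.isUnit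
    rw [← hT2, det_mul] at hSdet
    exact (IsUnit.mul_iff.mp hSdet).1
  have hR₁det : IsUnit R₁.det := hR₁pd.det_pos.ne'.isUnit
  have hR₂det : IsUnit R₂.det := hR₂pd.det_pos.ne'.isUnit
  set U₁ := T * B₁ * R₁ with hU₁def
  set U₂ := T * B₂ * R₂ with hU₂def
  have hU₁ : U₁ᵀ * U₁ = 1 := by
    have e : U₁ᵀ * U₁ = R₁ * (B₁ᵀ * S * B₁) * R₁ := by
      rw [hU₁def, transpose_mul, transpose_mul, hTt, hR₁t, ← hT2]
      simp only [Matrix.mul_assoc]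
    rw [e, hR₁e]
  have hU₂ : U₂ᵀ * U₂ = 1 := by
    have e : U₂ᵀ * U₂ = R₂ * (B₂ᵀ * S * B₂) * R₂ := by
      rw [hU₂def, transpose_mul, transpose_mul, hTt, hR₂t, ← hT2]
      simp only [Matrix.mul_assoc]
    rw [e, hR₂e]
  have hΩ : R₁ * (B₁ᵀ * S * B₂) * R₂ = U₁ᵀ * U₂ := by
    rw [hU₁def, hU₂def, transpose_mul, transpose_mul, hTt, hR₁t, ← hT2]
    simp only [Matrix.mul_assoc]
  obtain ⟨hle, hiff⟩ := Stmt5Aux.key U₁ U₂ hU₁ hU₂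
  rw [hΩ]
  refine ⟨hle, ?_⟩
  rw [hiff]
  have hTinj : Function.Injective (toEuclideanLin T) := Stmt5Aux.eucl_inj hTdetU
  have hr : ∀ {r : ℕ} (B : Matrix (Fin p) (Fin r) ℝ) (R : Matrix (Fin r) (Fin r) ℝ),
      IsUnit R.det →
      LinearMap.range (toEuclideanLin (T * B * R)) =
        Submodule.map (toEuclideanLin T) (LinearMap.range (toEuclideanLin B)) := by
    intro r B R hR
    rw [show T * B * R = T * (B * R) from by rw [Matrix.mul_assoc]]
    rw [Stmt5Aux.euclin_mul, LinearMap.range_comp, Stmt5Aux.euclin_mul, LinearMap.range_comp,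
      Stmt5Aux.eucl_surj hR, Submodule.map_top]
  rw [hr B₁ R₁ hR₁det, hr B₂ R₂ hR₂det, ← Submodule.map_inf _ hTinj]
  have hker : LinearMap.ker (toEuclideanLin T) = ⊥ := LinearMap.ker_eq_bot.mpr hTinj
  have hmb : ∀ q : Submodule ℝ (EuclideanSpace ℝ (Fin p)),
      Submodule.map (toEuclideanLin T) q = ⊥ ↔ q = ⊥ := fun q => by
    constructor
    · intro h
      apply Submodule.map_injective_of_injective hTinj
      rw [h, Submodule.map_bot]
    · intro h; rw [h, Submodule.map_bot]
  rw [hmb]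
  have hrk : (fromCols B₁ B₂).rank = Module.finrank ℝ
      ((LinearMap.range (toEuclideanLin B₁) ⊔ LinearMap.range (toEuclideanLin B₂) :
        Submodule ℝ (EuclideanSpace ℝ (Fin p)))) := by
    rw [Stmt5Aux.rank_eucl, Stmt5Aux.range_fromColumns]
  have hfr1 : Module.finrank ℝ (LinearMap.range (toEuclideanLin B₁)) = r₁ := by
    rw [← Stmt5Aux.rank_eucl]; exact h₁
  have hfr2 : Module.finrank ℝ (LinearMap.range (toEuclideanLin B₂)) = r₂ := by
    rw [← Stmt5Aux.rank_eucl]; exact h₂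
  have hsum := Submodule.finrank_sup_add_finrank_inf_eq
    (LinearMap.range (toEuclideanLin B₁)) (LinearMap.range (toEuclideanLin B₂))
  rw [hfr1, hfr2] at hsum
  constructor
  · intro hbotv
    rw [hrk]
    rw [hbotv, finrank_bot] at hsum
    omega
  · intro hrank
    rw [hrk] at hrank
    have h0 : Module.finrank ℝ
        ((LinearMap.range (toEuclideanLin B₁) ⊓ LinearMap.range (toEuclideanLin B₂)) :
          Submodule ℝ (EuclideanSpace ℝ (Fin p))) = 0 := by omega
    exact Submodule.finrank_eq_zero.mp h0
end

section
/- Fix a partition {G_j}_{j=1}^M of {1,…,p}, positive weights ω ∈ ℝ^M, T ⊆ {1,…,M}, and ξ ≥ 0. Define the cone C(ξ,ω,T) = {u ∈ ℝ^p : Σ_{j∈T^c} ω_j ‖u_{G_j}‖₂ ≤ ξ Σ_{j∈T} ω_j ‖u_{G_j}‖₂ ≠ 0}. Then for every u in the sign-restricted cone C_−(ξ,ω,T) = {u ∈ C(ξ,ω,T) : u_{G_j}^T X_{G_j}^T X u ≤ 0 for all j ∈ T^c}, one has ‖Xu‖₂² / max_j(ω_j^{−1}‖X_{G_j}^T X u‖₂)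 ≤ Σ_{j∈T} ω_j ‖u_{G_j}‖₂ ≤ ‖u_{G_T}‖₂ (Σ_{j∈T} ω_j²)^{1/2}. -/
open Matrix

/-- Groupwise ℓ₂ norm: the ℓ₂ norm of the restriction of `v` to the coordinate set `s`. -/
noncomputable def gnorm {p : ℕ} (v : Fin p → ℝ) (s : Finset (Fin p)) : ℝ :=
  Real.sqrt (∑ i ∈ s, v i ^ 2)

lemma gnorm_nonneg {p : ℕ} (v : Fin p → ℝ) (s : Finset (Fin p)) : 0 ≤ gnorm v s :=
  Real.sqrt_nonneg _

lemma gnorm_sq {p : ℕ} (v : Fin p → ℝ) (s : Finset (Fin p)) :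
    gnorm v s ^ 2 = ∑ i ∈ s, v i ^ 2 :=
  Real.sq_sqrt (Finset.sum_nonneg fun i _ => sq_nonneg _)

lemma cs_gnorm {p : ℕ} (f g : Fin p → ℝ) (s : Finset (Fin p)) :
    ∑ i ∈ s, f i * g i ≤ gnorm f s * gnorm g s := by
  have h := Finset.sum_mul_sq_le_sq_mul_sq s f g
  have h2 : (∑ i ∈ s, f i * g i) ≤ Real.sqrt ((∑ i ∈ s, f i ^ 2) * ∑ i ∈ s, g i ^ 2) := by
    calc ∑ i ∈ s, f i * g i ≤ |∑ i ∈ s, f i * g i| := le_abs_self _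
    _ = Real.sqrt ((∑ i ∈ s, f i * g i) ^ 2) := (Real.sqrt_sq_eq_abs _).symm
    _ ≤ _ := Real.sqrt_le_sqrt h
  simpa [gnorm, Real.sqrt_mul (Finset.sum_nonneg fun i _ => sq_nonneg (f i))] using h2

/-- for `u` in the sign-restricted cone `C₋(ξ,ω,T)`,
`‖Xu‖₂² / max_j (ω_j⁻¹ ‖X_{G_j}ᵀ X u‖₂) ≤ Σ_{j∈T} ω_j ‖u_{G_j}‖₂
  ≤ ‖u_{G_T}‖₂ (Σ_{j∈T} ω_j²)^{1/2}`. -/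
theorem stmt11 {n p M : ℕ} (X : Matrix (Fin n) (Fin p) ℝ)
    (G : Fin M → Finset (Fin p)) (hpart : ∀ i : Fin p, ∃! j, i ∈ G j)
    (ω : Fin M → ℝ) (hω : ∀ j, 0 < ω j)
    (T : Finset (Fin M)) (ξ : ℝ) (hξ : 0 ≤ ξ) (u : Fin p → ℝ)
    (hcone₁ : ∑ j ∈ Tᶜ, ω j * gnorm u (G j) ≤ ξ * ∑ j ∈ T, ω j * gnorm u (G j))
    (hcone₂ : ∑ j ∈ T, ω j * gnorm u (G j) ≠ 0)
    (hsign : ∀ j ∉ T, ∑ i ∈ G j, u i * (Xᵀ *ᵥ (X *ᵥ u)) i ≤ 0)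
    (hpos : 0 < ⨆ j, (ω j)⁻¹ * gnorm (Xᵀ *ᵥ (X *ᵥ u)) (G j)) :
    (∑ i, (X *ᵥ u) i ^ 2) / (⨆ j, (ω j)⁻¹ * gnorm (Xᵀ *ᵥ (X *ᵥ u)) (G j))
        ≤ ∑ j ∈ T, ω j * gnorm u (G j) ∧
      ∑ j ∈ T, ω j * gnorm u (G j)
        ≤ gnorm u (T.biUnion G) * Real.sqrt (∑ j ∈ T, ω j ^ 2) := by
  set v : Fin p → ℝ := Xᵀ *ᵥ (X *ᵥ u) with hv
  set S : ℝ := ⨆ j, (ω j)⁻¹ * gnorm v (G j) with hS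
  have hdisj : ((Finset.univ : Finset (Fin M)) : Set (Fin M)).PairwiseDisjoint G := by
    intro a _ b _ hab
    simp only [Finset.disjoint_left]
    intro i hia hib
    exact hab (((hpart i).unique hia hib).symm ▸ rfl)
  have hdisjT : (T : Set (Fin M)).PairwiseDisjoint G :=
    hdisj.subset (by simp)
  have huniv : (Finset.univ : Finset (Fin p)) = Finset.univ.biUnion G := by
    ext i
    simp only [Finset.mem_biUnion, Finset.mem_univ, true_iff]
    exact ⟨(hpart i).choose, by simp, (hpart i).choose_spec.1⟩
  have hbdd : BddAbove (Set.range fun j => (ω j)⁻¹ * gnorm v (G j)) :=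
    Set.Finite.bddAbove (Set.finite_range _)
  -- key equality
  have key : (∑ i, (X *ᵥ u) i ^ 2) = ∑ j, ∑ i ∈ G j, u i * v i := by
    have h1 : (∑ i, (X *ᵥ u) i ^ 2) = u ⬝ᵥ v := by
      rw [hv, dotProduct_mulVec, vecMul_transpose, dotProduct]
      simp [sq]
    rw [h1, dotProduct]
    rw [show (∑ i, u i * v i) = ∑ i ∈ Finset.univ.biUnion G, u i * v i by rw [← huniv]]
    exact Finset.sum_biUnion hdisj
  constructor
  · rw [div_le_iff₀ hpos]
    have step1 : (∑ i, (X *ᵥ u) i ^ 2) ≤ ∑ j ∈ T, ∑ i ∈ G j, u i * v i := by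
      rw [key, ← Finset.sum_add_sum_compl T]
      have : ∑ j ∈ Tᶜ, ∑ i ∈ G j, u i * v i ≤ 0 :=
        Finset.sum_nonpos fun j hj => hsign j (Finset.mem_compl.mp hj)
      linarith
    have step2 : ∑ j ∈ T, ∑ i ∈ G j, u i * v i ≤ (∑ j ∈ T, ω j * gnorm u (G j)) * S := by
      rw [Finset.sum_mul]
      refine Finset.sum_le_sum fun j _ => ?_
      calc ∑ i ∈ G j, u i * v i ≤ gnorm u (G j) * gnorm v (G j) := cs_gnorm u v (G j)
      _ = (ω j * gnorm u (G j)) * ((ω j)⁻¹ * gnorm v (G j)) := by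
          rw [mul_mul_mul_comm, mul_inv_cancel₀ (hω j).ne', one_mul]
      _ ≤ (ω j * gnorm u (G j)) * S :=
          mul_le_mul_of_nonneg_left (le_ciSup hbdd j)
            (mul_nonneg (hω j).le (gnorm_nonneg _ _))
    exact step1.trans step2
  · -- Cauchy–Schwarz over T
    have h := cs_gnorm (fun j => gnorm u (G j)) ω T
    have hgn : gnorm (fun j => gnorm u (G j)) T = gnorm u (T.biUnion G) := by
      unfold gnorm
      congr 1
      rw [Finset.sum_biUnion hdisjT]
      exact Finset.sum_congr rfl fun j _ => gnorm_sq u (G j)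
    calc ∑ j ∈ T, ω j * gnorm u (G j) = ∑ j ∈ T, gnorm u (G j) * ω j := by
          simp [mul_comm]
    _ ≤ gnorm (fun j => gnorm u (G j)) T * gnorm ω T := h
    _ = gnorm u (T.biUnion G) * Real.sqrt (∑ j ∈ T, ω j ^ 2) := by rw [hgn]; rfl
end

section
/- Let β̂ be a group Lasso minimizer of ‖y − Xβ‖₂²/(2n) + Σ_j ω_j‖β_{G_j}‖₂ and β* a vector with supp(β*) ⊆ G_{S*} for some S* ⊆ {1,…,M}. Let h = β̂ − β* and ε = y − Xβ*. If ‖X_{G_j}^T ε‖₂/(ω_j n) ≤ (ξ−1)/(ξ+1) for all j (with ξ > 1), then h lies in the sign-restricted cone C_−(ξ, ω, S*), and moreover max_j ‖X_{G_j}^T X h‖₂/(ω_j n) ≤ 2ξ/(ξ+1). -/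
open Matrix

lemma gnorm_congr {p : ℕ} {u v : Fin p → ℝ} {s : Finset (Fin p)}
    (h : ∀ i ∈ s, u i = v i) : gnorm u s = gnorm v s := by
  unfold gnorm
  rw [Finset.sum_congr rfl fun i hi => by rw [h i hi]]

lemma gnorm_eq_zero {p : ℕ} {v : Fin p → ℝ} {s : Finset (Fin p)} :
    gnorm v s = 0 ↔ ∀ i ∈ s, v i = 0 := by
  unfold gnorm
  rw [Real.sqrt_eq_zero (Finset.sum_nonneg fun i _ => sq_nonneg _),
    Finset.sum_eq_zero_iff_of_nonneg fun i _ => sq_nonneg _]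
  simp [pow_eq_zero_iff]

lemma gnorm_cauchy {p : ℕ} (u v : Fin p → ℝ) (s : Finset (Fin p)) :
    ∑ i ∈ s, u i * v i ≤ gnorm u s * gnorm v s := by
  have h := Finset.sum_mul_sq_le_sq_mul_sq s u v
  have h1 : 0 ≤ gnorm u s * gnorm v s :=
    mul_nonneg (gnorm_nonneg _ _) (gnorm_nonneg _ _)
  nlinarith [gnorm_sq u s, gnorm_sq v s]

lemma gnorm_add_le {p : ℕ} (u v : Fin p → ℝ) (s : Finset (Fin p)) :
    gnorm (u + v) s ≤ gnorm u s + gnorm v s := by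
  have hc := gnorm_cauchy u v s
  have hexp : ∑ i ∈ s, (u + v) i ^ 2
      = (∑ i ∈ s, u i ^ 2) + 2 * (∑ i ∈ s, u i * v i) + ∑ i ∈ s, v i ^ 2 := by
    simp only [Pi.add_apply, add_sq]
    rw [Finset.sum_add_distrib, Finset.sum_add_distrib, Finset.mul_sum]
    congr 1
    · congr 1
      exact Finset.sum_congr rfl fun i _ => by ring
  have hsq : gnorm (u + v) s ^ 2 ≤ (gnorm u s + gnorm v s) ^ 2 := by
    rw [gnorm_sq, hexp]
    nlinarith [gnorm_sq u s, gnorm_sq v s]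
  nlinarith [gnorm_nonneg (u + v) s, gnorm_nonneg u s, gnorm_nonneg v s]

lemma gnorm_smul {p : ℕ} (t : ℝ) (v : Fin p → ℝ) (s : Finset (Fin p)) :
    gnorm (t • v) s = |t| * gnorm v s := by
  unfold gnorm
  have : ∑ i ∈ s, (t • v) i ^ 2 = t ^ 2 * ∑ i ∈ s, v i ^ 2 := by
    rw [Finset.mul_sum]
    exact Finset.sum_congr rfl fun i _ => by simp only [Pi.smul_apply, smul_eq_mul]; ring
  rw [this, Real.sqrt_mul (sq_nonneg t), Real.sqrt_sq_eq_abs]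

lemma gnorm_neg {p : ℕ} (v : Fin p → ℝ) (s : Finset (Fin p)) :
    gnorm (-v) s = gnorm v s := by
  unfold gnorm
  congr 1
  exact Finset.sum_congr rfl fun i _ => by simp

lemma key_limit {a b : ℝ} (h : ∀ t : ℝ, 0 < t → t ≤ 1 → 0 ≤ a * t ^ 2 + b * t) :
    0 ≤ b := by
  by_contra hb
  push_neg at hb
  rcases le_or_gt a 0 with ha | ha
  · have := h 1 one_pos le_rfl; nlinarith
  · have ht0 : 0 < min 1 (-b / (2 * a)) := lt_min one_pos (div_pos (by linarith) (by linarith))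
    have ht1 : min 1 (-b / (2 * a)) ≤ 1 := min_le_left _ _
    have hkey := h _ ht0 ht1
    have h2 : min 1 (-b / (2 * a)) ≤ -b / (2 * a) := min_le_right _ _
    have h3 : a * min 1 (-b / (2 * a)) ≤ -b / 2 := by
      have := mul_le_mul_of_nonneg_left h2 ha.le
      calc a * min 1 (-b / (2 * a)) ≤ a * (-b / (2 * a)) := this
        _ = -b / 2 := by field_simp
    nlinarith

/-- KKT-type inequality from minimality via a one-sided perturbation. -/
lemma perturb {n p M : ℕ} (hn : 0 < n) (y : Fin n → ℝ)
    (X : Matrix (Fin n) (Fin p) ℝ) (G : Fin M → Finset (Fin p)) (ω : Fin M → ℝ)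
    (βhat : Fin p → ℝ)
    (hmin : ∀ β' : Fin p → ℝ,
      (∑ i, (y - X *ᵥ βhat) i ^ 2) / (2 * n) + ∑ j, ω j * gnorm βhat (G j)
        ≤ (∑ i, (y - X *ᵥ β') i ^ 2) / (2 * n) + ∑ j, ω j * gnorm β' (G j))
    (j : Fin M) (hωj : 0 ≤ ω j) (d : Fin p → ℝ)
    (hd : ∀ k, k ≠ j → ∀ i ∈ G k, d i = 0)
    (pen : ℝ)
    (hpen : ∀ t : ℝ, 0 < t → t ≤ 1 →
      gnorm (βhat + t • d) (G j) ≤ gnorm βhat (G j) + t * pen) :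
    ∑ i, (y - X *ᵥ βhat) i * (X *ᵥ d) i ≤ n * (ω j * pen) := by
  have hn' : (0 : ℝ) < n := by exact_mod_cast hn
  set r : Fin n → ℝ := y - X *ᵥ βhat with hr
  set S : ℝ := ∑ i, r i * (X *ᵥ d) i with hS
  set Q : ℝ := ∑ i, (X *ᵥ d) i ^ 2 with hQ
  have key : ∀ t : ℝ, 0 < t → t ≤ 1 →
      0 ≤ (Q / (2 * n)) * t ^ 2 + (ω j * pen - S / n) * t := by
    intro t ht0 ht1
    have hm := hmin (βhat + t • d)
    have e1 : y - X *ᵥ (βhat + t • d) = r - t • (X *ᵥ d) := by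
      rw [mulVec_add, mulVec_smul, hr]; abel
    have e2 : ∑ i, (y - X *ᵥ (βhat + t • d)) i ^ 2
        = (∑ i, r i ^ 2) - 2 * t * S + t ^ 2 * Q := by
      rw [e1, hS, hQ, Finset.mul_sum, Finset.mul_sum, ← Finset.sum_sub_distrib,
        ← Finset.sum_add_distrib]
      exact Finset.sum_congr rfl fun i _ => by
        simp only [Pi.sub_apply, Pi.smul_apply, smul_eq_mul]; ring
    have e3 : ∑ k, ω k * gnorm (βhat + t • d) (G k)
        ≤ (∑ k, ω k * gnorm βhat (G k)) + t * (ω j * pen) := by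
      have hsplit1 := Finset.add_sum_erase Finset.univ
        (fun k => ω k * gnorm (βhat + t • d) (G k)) (Finset.mem_univ j)
      have hsplit2 := Finset.add_sum_erase Finset.univ
        (fun k => ω k * gnorm βhat (G k)) (Finset.mem_univ j)
      have herase : ∑ k ∈ Finset.univ.erase j, ω k * gnorm (βhat + t • d) (G k)
          = ∑ k ∈ Finset.univ.erase j, ω k * gnorm βhat (G k) := by
        refine Finset.sum_congr rfl fun k hk => ?_
        have hkj : k ≠ j := (Finset.mem_erase.mp hk).1
        congr 1
        refine gnorm_congr fun i hi => ?_
        simp [hd k hkj i hi]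
      have hj : ω j * gnorm (βhat + t • d) (G j)
          ≤ ω j * gnorm βhat (G j) + t * (ω j * pen) := by
        have := mul_le_mul_of_nonneg_left (hpen t ht0 ht1) hωj
        nlinarith
      calc ∑ k, ω k * gnorm (βhat + t • d) (G k)
          = ω j * gnorm (βhat + t • d) (G j)
            + ∑ k ∈ Finset.univ.erase j, ω k * gnorm (βhat + t • d) (G k) :=
            hsplit1.symm
        _ ≤ ω j * gnorm βhat (G j) + t * (ω j * pen)
            + ∑ k ∈ Finset.univ.erase j, ω k * gnorm βhat (G k) := by
            rw [herase]; linarith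
        _ = (∑ k, ω k * gnorm βhat (G k)) + t * (ω j * pen) := by
            rw [← hsplit2]; ring
    rw [e2] at hm
    have halg : ((∑ i, r i ^ 2) - 2 * t * S + t ^ 2 * Q) / (2 * n)
        = (∑ i, r i ^ 2) / (2 * n) - t * (S / n) + t ^ 2 * (Q / (2 * n)) := by
      field_simp
    rw [halg] at hm
    nlinarith [hm, e3]
  have := key_limit key
  have h2 : S / n ≤ ω j * pen := by linarith
  calc S ≤ (ω j * pen) * n := (div_le_iff₀ hn').mp h2
    _ = n * (ω j * pen) := by ring

set_option maxHeartbeats 1000000 in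
/-- on the event `max_j ‖X_{G_j}ᵀ ε‖₂/(ω_j n) ≤ (ξ−1)/(ξ+1)` (with
`ε = y − Xβ*`), the group Lasso error `h = β̂ − β*` lies in the sign-restricted cone
`C₋(ξ, ω, S*)` (with the convention that `h = 0` is allowed), and
`max_j ‖X_{G_j}ᵀ X h‖₂/(ω_j n) ≤ 2ξ/(ξ+1)`. -/
theorem stmt14 {n p M : ℕ} (hn : 0 < n) (y : Fin n → ℝ)
    (X : Matrix (Fin n) (Fin p) ℝ)
    (G : Fin M → Finset (Fin p)) (hpart : ∀ i : Fin p, ∃! j, i ∈ G j)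
    (ω : Fin M → ℝ) (hω : ∀ j, 0 < ω j)
    (Sstar : Finset (Fin M)) (ξ : ℝ) (hξ : 1 < ξ)
    (βstar βhat : Fin p → ℝ)
    (hsupp : ∀ i, βstar i ≠ 0 → ∃ j ∈ Sstar, i ∈ G j)
    (hmin : ∀ β' : Fin p → ℝ,
      (∑ i, (y - X *ᵥ βhat) i ^ 2) / (2 * n) + ∑ j, ω j * gnorm βhat (G j)
        ≤ (∑ i, (y - X *ᵥ β') i ^ 2) / (2 * n) + ∑ j, ω j * gnorm β' (G j))
    (hevent : ∀ j, gnorm (Xᵀ *ᵥ (y - X *ᵥ βstar)) (G j) / (ω j * n) ≤ (ξ - 1) / (ξ + 1)) :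
    (∑ j ∈ Sstarᶜ, ω j * gnorm (βhat - βstar) (G j)
        ≤ ξ * ∑ j ∈ Sstar, ω j * gnorm (βhat - βstar) (G j)) ∧
      (∀ j ∉ Sstar,
        ∑ i ∈ G j, (βhat - βstar) i * (Xᵀ *ᵥ (X *ᵥ (βhat - βstar))) i ≤ 0) ∧
      (βhat - βstar = 0 ∨ ∑ j ∈ Sstar, ω j * gnorm (βhat - βstar) (G j) ≠ 0) ∧
      (∀ j, gnorm (Xᵀ *ᵥ (X *ᵥ (βhat - βstar))) (G j) / (ω j * n) ≤ 2 * ξ / (ξ + 1)) := by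
  have hn' : (0 : ℝ) < n := by exact_mod_cast hn
  have hξ1 : (0 : ℝ) < ξ + 1 := by linarith
  set κ : ℝ := (ξ - 1) / (ξ + 1) with hκdef
  have hκa : κ * (ξ + 1) = ξ - 1 := by rw [hκdef]; field_simp
  have hκ1 : κ < 1 := by rw [hκdef, div_lt_one hξ1]; linarith
  set h : Fin p → ℝ := βhat - βstar with hhdef
  set ε : Fin n → ℝ := y - X *ᵥ βstar with hεdef
  set r : Fin n → ℝ := y - X *ᵥ βhat with hrdef
  choose g hg1 hg2 using hpart
  have hGfilter : ∀ j, G j = Finset.univ.filter (fun i => g i = j) := by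
    intro j; ext i
    simp only [Finset.mem_filter, Finset.mem_univ, true_and]
    exact ⟨fun hij => (hg2 i j hij).symm, fun hij => hij ▸ hg1 i⟩
  have hsumdec : ∀ f : Fin p → ℝ, ∑ i, f i = ∑ j, ∑ i ∈ G j, f i := by
    intro f
    rw [← Finset.sum_fiberwise Finset.univ g f]
    exact Finset.sum_congr rfl fun j _ => by rw [hGfilter j]
  have hstar0 : ∀ j ∉ Sstar, ∀ i ∈ G j, βstar i = 0 := by
    intro j hj i hi
    by_contra hne
    obtain ⟨k, hk, hik⟩ := hsupp i hne
    have hkj : k = j := by rw [hg2 i k hik, hg2 i j hi]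
    exact hj (hkj ▸ hk)
  have hβh : ∀ j ∉ Sstar, ∀ i ∈ G j, h i = βhat i := by
    intro j hj i hi
    simp [hhdef, hstar0 j hj i hi]
  have hev' : ∀ j, gnorm (Xᵀ *ᵥ ε) (G j) ≤ κ * (ω j * ↑n) := by
    intro j
    have := hevent j
    rwa [div_le_iff₀ (mul_pos (hω j) hn')] at this
  have hdot : ∀ (a : Fin n → ℝ) (b : Fin p → ℝ),
      ∑ i, a i * (X *ᵥ b) i = ∑ i, (Xᵀ *ᵥ a) i * b i := by
    intro a b
    have h1 : ∑ i, a i * (X *ᵥ b) i = a ⬝ᵥ (X *ᵥ b) := rfl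
    have h2 : ∑ i, (Xᵀ *ᵥ a) i * b i = (Xᵀ *ᵥ a) ⬝ᵥ b := rfl
    rw [h1, h2, dotProduct_mulVec, mulVec_transpose]
  have hXh : X *ᵥ h = ε - r := by
    rw [hhdef, mulVec_sub, hεdef, hrdef]; abel
  have hXtXh : Xᵀ *ᵥ (X *ᵥ h) = (Xᵀ *ᵥ ε) - (Xᵀ *ᵥ r) := by
    rw [hXh, mulVec_sub]
  -- KKT (A): every group satisfies ‖X_{G_j}ᵀ r‖ ≤ ω_j n
  have hA : ∀ j, gnorm (Xᵀ *ᵥ r) (G j) ≤ ω j * ↑n := by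
    intro j
    classical
    set d : Fin p → ℝ := fun i => if i ∈ G j then (Xᵀ *ᵥ r) i else 0 with hddef
    have hdz : ∀ k, k ≠ j → ∀ i ∈ G k, d i = 0 := by
      intro k hk i hi
      have hij : i ∉ G j := fun hij => hk (by rw [hg2 i k hi, hg2 i j hij])
      simp [hddef, hij]
    have hgd : gnorm d (G j) = gnorm (Xᵀ *ᵥ r) (G j) :=
      gnorm_congr fun i hi => by simp [hddef, hi]
    have hpen : ∀ t : ℝ, 0 < t → t ≤ 1 →
        gnorm (βhat + t • d) (G j) ≤ gnorm βhat (G j) + t * gnorm d (G j) := by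
      intro t ht0 _
      calc gnorm (βhat + t • d) (G j)
          ≤ gnorm βhat (G j) + gnorm (t • d) (G j) := gnorm_add_le _ _ _
        _ = gnorm βhat (G j) + t * gnorm d (G j) := by
            rw [gnorm_smul, abs_of_pos ht0]
    have hp := perturb hn y X G ω βhat hmin j (hω j).le d hdz _ hpen
    have hL : ∑ i, r i * (X *ᵥ d) i = gnorm (Xᵀ *ᵥ r) (G j) ^ 2 := by
      rw [hdot r d, gnorm_sq]
      rw [← Finset.sum_subset (Finset.subset_univ (G j))
        (fun i _ hi => by simp [hddef, hi])]
      exact Finset.sum_congr rfl fun i hi => by simp [hddef, hi]; ring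
    rw [hL, hgd] at hp
    rcases eq_or_lt_of_le (gnorm_nonneg (Xᵀ *ᵥ r) (G j)) with h0 | h0
    · rw [← h0]; exact mul_nonneg (hω j).le hn'.le
    · nlinarith [hp, h0]
  -- KKT (B): for inactive groups
  have hB : ∀ j ∉ Sstar,
      ↑n * (ω j * gnorm h (G j)) ≤ ∑ i ∈ G j, h i * (Xᵀ *ᵥ r) i := by
    intro j hj
    classical
    set d : Fin p → ℝ := fun i => if i ∈ G j then -(βhat i) else 0 with hddef
    have hdz : ∀ k, k ≠ j → ∀ i ∈ G k, d i = 0 := by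
      intro k hk i hi
      have hij : i ∉ G j := fun hij => hk (by rw [hg2 i k hi, hg2 i j hij])
      simp [hddef, hij]
    have hpen : ∀ t : ℝ, 0 < t → t ≤ 1 →
        gnorm (βhat + t • d) (G j) ≤ gnorm βhat (G j) + t * (-(gnorm βhat (G j))) := by
      intro t ht0 ht1
      have hcg : gnorm (βhat + t • d) (G j) = gnorm ((1 - t) • βhat) (G j) :=
        gnorm_congr fun i hi => by simp [hddef, hi]; ring
      rw [hcg, gnorm_smul, abs_of_nonneg (by linarith : (0:ℝ) ≤ 1 - t)]
      exact le_of_eq (by ring)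
    have hp := perturb hn y X G ω βhat hmin j (hω j).le d hdz _ hpen
    have hL : ∑ i, r i * (X *ᵥ d) i = -∑ i ∈ G j, βhat i * (Xᵀ *ᵥ r) i := by
      rw [hdot r d]
      rw [← Finset.sum_subset (Finset.subset_univ (G j))
        (fun i _ hi => by simp [hddef, hi])]
      rw [← Finset.sum_neg_distrib]
      exact Finset.sum_congr rfl fun i hi => by simp [hddef, hi]; ring
    rw [hL] at hp
    have hgh : gnorm βhat (G j) = gnorm h (G j) :=
      (gnorm_congr fun i hi => hβh j hj i hi).symm
    have hsum : ∑ i ∈ G j, h i * (Xᵀ *ᵥ r) i = ∑ i ∈ G j, βhat i * (Xᵀ *ᵥ r) i :=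
      Finset.sum_congr rfl fun i hi => by rw [hβh j hj i hi]
    rw [hsum, ← hgh]
    linarith [hp]
  -- Part 1: basic inequality and the cone
  set A : ℝ := ∑ j ∈ Sstar, ω j * gnorm h (G j) with hAdef
  set B : ℝ := ∑ j ∈ Sstarᶜ, ω j * gnorm h (G j) with hBdef
  have hA0 : 0 ≤ A := Finset.sum_nonneg fun j _ =>
    mul_nonneg (hω j).le (gnorm_nonneg _ _)
  have hB0 : 0 ≤ B := Finset.sum_nonneg fun j _ =>
    mul_nonneg (hω j).le (gnorm_nonneg _ _)
  have part1 : B ≤ ξ * A := by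
    have hb := hmin βstar
    have hre : r = ε - X *ᵥ h := by rw [hXh]; abel
    set T : ℝ := ∑ i, ε i * (X *ᵥ h) i with hTdef
    set Qh : ℝ := ∑ i, (X *ᵥ h) i ^ 2 with hQhdef
    have hexp : ∑ i, r i ^ 2 = (∑ i, ε i ^ 2) - 2 * T + Qh := by
      rw [hre, hTdef, hQhdef, Finset.mul_sum, ← Finset.sum_sub_distrib,
        ← Finset.sum_add_distrib]
      exact Finset.sum_congr rfl fun i _ => by
        simp only [Pi.sub_apply]; ring
    have hQh0 : 0 ≤ Qh := Finset.sum_nonneg fun i _ => sq_nonneg _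
    have hTb : T ≤ κ * ↑n * (A + B) := by
      have step : T ≤ ∑ j, κ * (ω j * ↑n) * gnorm h (G j) := by
        rw [hTdef, hdot ε h, hsumdec (fun i => (Xᵀ *ᵥ ε) i * h i)]
        refine Finset.sum_le_sum fun j _ => ?_
        calc ∑ i ∈ G j, (Xᵀ *ᵥ ε) i * h i
            ≤ gnorm (Xᵀ *ᵥ ε) (G j) * gnorm h (G j) := gnorm_cauchy _ _ _
          _ ≤ κ * (ω j * ↑n) * gnorm h (G j) :=
              mul_le_mul_of_nonneg_right (hev' j) (gnorm_nonneg _ _)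
      have heq : ∑ j, κ * (ω j * ↑n) * gnorm h (G j) = κ * ↑n * (A + B) := by
        rw [hAdef, hBdef, Finset.sum_add_sum_compl Sstar
          (fun j => ω j * gnorm h (G j)), Finset.mul_sum]
        exact Finset.sum_congr rfl fun j _ => by ring
      linarith [step, heq.le, heq.ge]
    have hBstar0 : ∑ j ∈ Sstarᶜ, ω j * gnorm βstar (G j) = 0 :=
      Finset.sum_eq_zero fun j hj => by
        rw [gnorm_eq_zero.mpr (hstar0 j (Finset.mem_compl.mp hj)), mul_zero]
    have hBhat : ∑ j ∈ Sstarᶜ, ω j * gnorm βhat (G j) = B :=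
      Finset.sum_congr rfl fun j hj => by
        rw [(gnorm_congr fun i hi =>
          hβh j (Finset.mem_compl.mp hj) i hi : gnorm h (G j) = gnorm βhat (G j))]
    have hAstar : ∑ j ∈ Sstar, ω j * gnorm βstar (G j)
        - ∑ j ∈ Sstar, ω j * gnorm βhat (G j) ≤ A := by
      rw [hAdef, ← Finset.sum_sub_distrib]
      refine Finset.sum_le_sum fun j _ => ?_
      have hbs : βstar = βhat + -h := by rw [hhdef]; abel
      have htri : gnorm βstar (G j) ≤ gnorm βhat (G j) + gnorm h (G j) := by
        calc gnorm βstar (G j) = gnorm (βhat + -h) (G j) := by rw [hbs]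
          _ ≤ gnorm βhat (G j) + gnorm (-h) (G j) := gnorm_add_le _ _ _
          _ = gnorm βhat (G j) + gnorm h (G j) := by rw [gnorm_neg]
      nlinarith [htri, (hω j).le, gnorm_nonneg h (G j)]
    rw [hexp] at hb
    have halg : ((∑ i, ε i ^ 2) - 2 * T + Qh) / (2 * ↑n)
        = (∑ i, ε i ^ 2) / (2 * ↑n) - T / ↑n + Qh / (2 * ↑n) := by
      field_simp
    rw [halg] at hb
    have hsplit1 : ∑ j, ω j * gnorm βhat (G j)
        = (∑ j ∈ Sstar, ω j * gnorm βhat (G j)) + B := by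
      rw [← hBhat, Finset.sum_add_sum_compl]
    have hsplit2 : ∑ j, ω j * gnorm βstar (G j)
        = ∑ j ∈ Sstar, ω j * gnorm βstar (G j) := by
      rw [← Finset.sum_add_sum_compl Sstar (fun j => ω j * gnorm βstar (G j)),
        hBstar0, add_zero]
    rw [hsplit1, hsplit2] at hb
    have hTn : T / ↑n ≤ κ * (A + B) := by
      rw [div_le_iff₀ hn']
      calc T ≤ κ * ↑n * (A + B) := hTb
        _ = κ * (A + B) * ↑n := by ring
    have hQhn : 0 ≤ Qh / (2 * ↑n) := by positivity
    have hcomb : 0 ≤ κ * (A + B) + A - B := by linarith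
    have h4 : 0 ≤ (κ * (A + B) + A - B) * (ξ + 1) := mul_nonneg hcomb hξ1.le
    have h5 : (κ * (A + B) + A - B) * (ξ + 1)
        = (ξ - 1) * (A + B) + (A - B) * (ξ + 1) := by
      have e : κ * (A + B) * (ξ + 1) = (ξ - 1) * (A + B) := by
        rw [mul_right_comm, hκa]
      calc (κ * (A + B) + A - B) * (ξ + 1)
          = κ * (A + B) * (ξ + 1) + (A - B) * (ξ + 1) := by ring
        _ = (ξ - 1) * (A + B) + (A - B) * (ξ + 1) := by rw [e]
    have h6 : 0 ≤ (ξ - 1) * (A + B) + (A - B) * (ξ + 1) := h5 ▸ h4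
    nlinarith [h6]
  refine ⟨part1, ?_, ?_, ?_⟩
  · -- Part 2: sign restriction on inactive groups
    intro j hj
    rw [hXtXh]
    have hsplit : ∑ i ∈ G j, h i * ((Xᵀ *ᵥ ε) - (Xᵀ *ᵥ r)) i
        = (∑ i ∈ G j, h i * (Xᵀ *ᵥ ε) i) - ∑ i ∈ G j, h i * (Xᵀ *ᵥ r) i := by
      rw [← Finset.sum_sub_distrib]
      exact Finset.sum_congr rfl fun i _ => by simp only [Pi.sub_apply]; ring
    rw [hsplit]
    have h1 : ∑ i ∈ G j, h i * (Xᵀ *ᵥ ε) i ≤ gnorm h (G j) * (κ * (ω j * ↑n)) := by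
      calc ∑ i ∈ G j, h i * (Xᵀ *ᵥ ε) i
          ≤ gnorm h (G j) * gnorm (Xᵀ *ᵥ ε) (G j) := gnorm_cauchy _ _ _
        _ ≤ gnorm h (G j) * (κ * (ω j * ↑n)) :=
            mul_le_mul_of_nonneg_left (hev' j) (gnorm_nonneg _ _)
    have h2 := hB j hj
    have h3 : 0 ≤ gnorm h (G j) * (ω j * ↑n) * (1 - κ) :=
      mul_nonneg (mul_nonneg (gnorm_nonneg _ _) (mul_nonneg (hω j).le hn'.le)) (by linarith)
    nlinarith [h1, h2, h3]
  · -- Part 3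
    by_cases hA0' : A = 0
    · left
      have hB0' : B = 0 := by
        have : B ≤ ξ * A := part1
        rw [hA0', mul_zero] at this
        linarith
      have hall : ∀ j, gnorm h (G j) = 0 := by
        intro j
        by_cases hj : j ∈ Sstar
        · have := (Finset.sum_eq_zero_iff_of_nonneg fun k _ =>
            mul_nonneg (hω k).le (gnorm_nonneg h (G k))).mp hA0' j hj
          have hωj := (hω j).ne'
          exact (mul_eq_zero.mp this).resolve_left hωj
        · have := (Finset.sum_eq_zero_iff_of_nonneg fun k _ =>
            mul_nonneg (hω k).le (gnorm_nonneg h (G k))).mp hB0' j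
            (Finset.mem_compl.mpr hj)
          have hωj := (hω j).ne'
          exact (mul_eq_zero.mp this).resolve_left hωj
      funext i
      have := gnorm_eq_zero.mp (hall (g i)) i (hg1 i)
      simpa using this
    · exact Or.inr hA0'
  · -- Part 4
    intro j
    rw [div_le_iff₀ (mul_pos (hω j) hn')]
    have htri : gnorm (Xᵀ *ᵥ (X *ᵥ h)) (G j)
        ≤ gnorm (Xᵀ *ᵥ ε) (G j) + gnorm (Xᵀ *ᵥ r) (G j) := by
      have he : Xᵀ *ᵥ (X *ᵥ h) = (Xᵀ *ᵥ ε) + -(Xᵀ *ᵥ r) := by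
        rw [hXtXh]; abel
      calc gnorm (Xᵀ *ᵥ (X *ᵥ h)) (G j)
          = gnorm ((Xᵀ *ᵥ ε) + -(Xᵀ *ᵥ r)) (G j) := by rw [he]
        _ ≤ gnorm (Xᵀ *ᵥ ε) (G j) + gnorm (-(Xᵀ *ᵥ r)) (G j) := gnorm_add_le _ _ _
        _ = gnorm (Xᵀ *ᵥ ε) (G j) + gnorm (Xᵀ *ᵥ r) (G j) := by rw [gnorm_neg]
    have hbound : gnorm (Xᵀ *ᵥ (X *ᵥ h)) (G j) ≤ κ * (ω j * ↑n) + ω j * ↑n := by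
      linarith [htri, hev' j, hA j]
    have hfin : κ * (ω j * ↑n) + ω j * ↑n = 2 * ξ / (ξ + 1) * (ω j * ↑n) := by
      rw [hκdef]; field_simp; ring
    linarith [hbound, hfin.le, hfin.ge]
end

section
/- Let h : [0,∞) → [0,∞) be non-increasing, q ≥ 1, a_q = (1−1/q)/q^{1/(q−1)}, t₀ > 0, and ξ > 1. If ∫₀^∞ h(x)dx ≤ (1+ξ)∫₀^{t₀} h(x)dx, then (∫_{t₀}^∞ h^q(x)dx)^{1/q} ≤ (1+ξ)(a_q/t₀)^{1−1/q} ∫₀^{t₀} h(x)dx, and consequently ∫₀^∞ h^q(x)dx ≤ (1 + (1+ξ) a_q^{1−1/q})^q ∫₀^{t₀} h^q(x)dx after applying Hölder's inequality ∫₀^{t₀} h ≤ t₀^{1−1/q}(∫₀^{t₀}h^q)^{1/q}. -/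
open MeasureTheory

lemma amgm_aux {q u S : ℝ} (hq : 1 < q) (hu : 0 ≤ u) (huS : u ≤ S) :
    u ^ (q - 1) * (S - u) ≤ (q - 1) ^ (q - 1) / q ^ q * S ^ q := by
  have hq0 : (0:ℝ) < q := lt_trans one_pos hq
  have hqm : (0:ℝ) < q - 1 := by linarith
  have hS0 : 0 ≤ S := le_trans hu huS
  have hSu : 0 ≤ S - u := by linarith
  set p₁ : ℝ := q * u / (q - 1) with hp₁def
  set p₂ : ℝ := q * (S - u) with hp₂def
  have hp₁ : 0 ≤ p₁ := by positivity
  have hp₂ : 0 ≤ p₂ := by positivity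
  have hw₁ : (0:ℝ) ≤ (q-1)/q := by positivity
  have hw₂ : (0:ℝ) ≤ 1/q := by positivity
  have hsum : (q-1)/q + 1/q = 1 := by field_simp; ring
  have key := Real.geom_mean_le_arith_mean2_weighted hw₁ hw₂ hp₁ hp₂ hsum
  have harith : (q-1)/q * p₁ + 1/q * p₂ = S := by
    rw [hp₁def, hp₂def]; field_simp; ring
  rw [harith] at key
  have key2 : (p₁ ^ ((q-1)/q) * p₂ ^ (1/q)) ^ q ≤ S ^ q :=
    Real.rpow_le_rpow (by positivity) key (le_of_lt hq0)
  have hexp : (p₁ ^ ((q-1)/q) * p₂ ^ (1/q)) ^ q = p₁ ^ (q-1) * p₂ := by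
    rw [Real.mul_rpow (Real.rpow_nonneg hp₁ _) (Real.rpow_nonneg hp₂ _),
      ← Real.rpow_mul hp₁, ← Real.rpow_mul hp₂,
      div_mul_cancel₀ _ (ne_of_gt hq0), one_div, inv_mul_cancel₀ (ne_of_gt hq0),
      Real.rpow_one]
  rw [hexp] at key2
  have hqq : q ^ q = q ^ (q-1) * q := by
    have h := Real.rpow_add hq0 (q-1) 1
    rw [Real.rpow_one] at h
    rw [← h]; ring_nf
  have hprod : p₁ ^ (q-1) * p₂ = q ^ q / (q-1) ^ (q-1) * (u ^ (q-1) * (S - u)) := by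
    rw [hp₁def, hp₂def, show q * u / (q-1) = (q/(q-1)) * u by ring,
      Real.mul_rpow (by positivity) hu, Real.div_rpow (le_of_lt hq0) (le_of_lt hqm), hqq]
    field_simp
  rw [hprod] at key2
  have hC : (0:ℝ) < q ^ q / (q-1) ^ (q-1) := by positivity
  rw [show (q-1)^(q-1)/q^q * S^q = S^q / (q^q/(q-1)^(q-1)) by
    rw [div_div_eq_mul_div, div_mul_eq_mul_div, mul_comm]]
  rw [le_div_iff₀ hC]
  linarith

lemma one_add_rpow_le {K q : ℝ} (hK : 0 ≤ K) (hq : 1 ≤ q) : 1 + K ^ q ≤ (1 + K) ^ q := by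
  have := NNReal.add_rpow_le_rpow_add (p := q) 1 ⟨K, hK⟩ hq
  have h2 := (NNReal.coe_le_coe).2 this
  push_cast [NNReal.coe_rpow] at h2
  rw [Real.one_rpow] at h2
  exact h2

/-- the continuous shifting inequality.  For a nonnegative non-increasing
`h` on `[0,∞)`, `q ≥ 1`, `a_q = (1 − 1/q)/q^{1/(q−1)}`, `t₀ > 0`, `ξ > 1`:
if `∫₀^∞ h ≤ (1+ξ) ∫₀^{t₀} h` then
`(∫_{t₀}^∞ h^q)^{1/q} ≤ (1+ξ)(a_q/t₀)^{1−1/q} ∫₀^{t₀} h`, and consequently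
`∫₀^∞ h^q ≤ (1 + (1+ξ) a_q^{1−1/q})^q ∫₀^{t₀} h^q`. -/
theorem stmt16 (h : ℝ → ℝ) (q t₀ ξ : ℝ)
    (hq : 1 ≤ q) (ht₀ : 0 < t₀) (hξ : 1 < ξ)
    (hnonneg : ∀ x, 0 ≤ h x) (hmono : AntitoneOn h (Set.Ici 0))
    (hint : IntegrableOn h (Set.Ioi 0))
    (hintq : IntegrableOn (fun x => h x ^ q) (Set.Ioi 0))
    (hhyp : ∫ x in Set.Ioi (0 : ℝ), h x ≤ (1 + ξ) * ∫ x in Set.Ioc 0 t₀, h x) :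
    (∫ x in Set.Ioi t₀, h x ^ q) ^ (1 / q)
        ≤ (1 + ξ) * ((1 - 1 / q) / q ^ (1 / (q - 1)) / t₀) ^ (1 - 1 / q)
          * ∫ x in Set.Ioc 0 t₀, h x ∧
      ∫ x in Set.Ioi (0 : ℝ), h x ^ q
        ≤ (1 + (1 + ξ) * ((1 - 1 / q) / q ^ (1 / (q - 1))) ^ (1 - 1 / q)) ^ q
          * ∫ x in Set.Ioc 0 t₀, h x ^ q := by
  have hq0 : (0:ℝ) < q := lt_of_lt_of_le one_pos hq
  have hqm0 : (0:ℝ) ≤ q - 1 := by linarith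
  have ht₀' : (0:ℝ) ≤ t₀ := le_of_lt ht₀
  have hsub : Set.Ioi t₀ ⊆ Set.Ioi (0:ℝ) := fun x hx => lt_trans ht₀ hx
  have hsub2 : Set.Ioc (0:ℝ) t₀ ⊆ Set.Ioi (0:ℝ) := fun x hx => hx.1
  have hintI : IntegrableOn h (Set.Ioc 0 t₀) := hint.mono_set hsub2
  have hintT : IntegrableOn h (Set.Ioi t₀) := hint.mono_set hsub
  have hintqI : IntegrableOn (fun x => h x ^ q) (Set.Ioc 0 t₀) := hintq.mono_set hsub2
  have hintqT : IntegrableOn (fun x => h x ^ q) (Set.Ioi t₀) := hintq.mono_set hsub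
  have hsplit : ∀ f : ℝ → ℝ, IntegrableOn f (Set.Ioc 0 t₀) → IntegrableOn f (Set.Ioi t₀) →
      ∫ x in Set.Ioi (0:ℝ), f x = (∫ x in Set.Ioc 0 t₀, f x) + ∫ x in Set.Ioi t₀, f x := by
    intro f h1 h2
    rw [← MeasureTheory.setIntegral_union Set.Ioc_disjoint_Ioi_same measurableSet_Ioi h1 h2,
      Set.Ioc_union_Ioi_eq_Ioi ht₀']
  set S := ∫ x in Set.Ioi (0:ℝ), h x with hSdef
  set I₀ := ∫ x in Set.Ioc (0:ℝ) t₀, h x with hI₀def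
  set T := ∫ x in Set.Ioi t₀, h x ^ q with hTdef
  set J := ∫ x in Set.Ioc (0:ℝ) t₀, h x ^ q with hJdef
  have hI₀0 : 0 ≤ I₀ := setIntegral_nonneg measurableSet_Ioc fun x _ => hnonneg x
  have hTail0 : 0 ≤ ∫ x in Set.Ioi t₀, h x :=
    setIntegral_nonneg measurableSet_Ioi fun x _ => hnonneg x
  have hT0 : 0 ≤ T :=
    setIntegral_nonneg measurableSet_Ioi fun x _ => Real.rpow_nonneg (hnonneg x) q
  have hJ0 : 0 ≤ J :=
    setIntegral_nonneg measurableSet_Ioc fun x _ => Real.rpow_nonneg (hnonneg x) q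
  have hS : S = I₀ + ∫ x in Set.Ioi t₀, h x := hsplit h hintI hintT
  have hSq : (∫ x in Set.Ioi (0:ℝ), h x ^ q) = J + T := hsplit _ hintqI hintqT
  have hS0 : 0 ≤ S := by rw [hS]; positivity
  have hI₀S : I₀ ≤ S := by rw [hS]; linarith
  set c := h t₀ with hcdef
  have hc0 : 0 ≤ c := hnonneg t₀
  have htc : t₀ * c ≤ I₀ := by
    have hconst : ∫ _x in Set.Ioc (0:ℝ) t₀, c = t₀ * c := by
      rw [setIntegral_const, Real.volume_real_Ioc, smul_eq_mul]
      rw [max_eq_left (by linarith)]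
      ring_nf
    rw [← hconst]
    refine setIntegral_mono_on (integrableOn_const ?_) hintI measurableSet_Ioc
      (fun x hx => hmono (Set.mem_Ici.2 (le_of_lt hx.1)) (Set.mem_Ici.2 ht₀') hx.2)
    rw [Real.volume_Ioc]; exact ENNReal.ofReal_ne_top
  have hpoint : ∀ x ∈ Set.Ioi t₀, h x ^ q ≤ c ^ (q-1) * h x := by
    intro x hx
    have hxc : h x ≤ c := hmono (Set.mem_Ici.2 ht₀') (Set.mem_Ici.2 (le_of_lt (lt_trans ht₀ hx)))
      (le_of_lt hx)
    rcases eq_or_lt_of_le (hnonneg x) with h0 | hpos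
    · rw [← h0, Real.zero_rpow (ne_of_gt hq0), mul_zero]
    · have heq : h x ^ q = h x ^ (q-1) * h x := by
        have h2 := Real.rpow_add hpos (q-1) 1
        rw [Real.rpow_one] at h2
        rw [← h2]; ring_nf
      rw [heq]
      exact mul_le_mul_of_nonneg_right (Real.rpow_le_rpow (hnonneg x) hxc hqm0) (hnonneg x)
  have htail : T ≤ c ^ (q-1) * (S - I₀) := by
    have h1 : T ≤ ∫ x in Set.Ioi t₀, c ^ (q-1) * h x :=
      setIntegral_mono_on hintqT (hintT.const_mul _) measurableSet_Ioi hpoint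
    have h3 := integral_smul (μ := volume.restrict (Set.Ioi t₀)) (c ^ (q-1)) h
    simp only [smul_eq_mul] at h3
    rw [h3] at h1
    have h2 : (∫ x in Set.Ioi t₀, h x) = S - I₀ := by rw [hS]; ring
    rw [h2] at h1
    exact h1
  rcases eq_or_lt_of_le hq with hq1 | hq1
  · -- q = 1
    subst hq1
    have htail1 : T ≤ S - I₀ := by
      have e : (1:ℝ) - 1 = 0 := by norm_num
      rw [e, Real.rpow_zero, one_mul] at htail
      exact htail
    constructor
    · norm_num
      linarith
    · rw [hSq]
      have hJI : J = I₀ := by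
        rw [hJdef, hI₀def]
        exact integral_congr_ae (Filter.Eventually.of_forall fun x => Real.rpow_one _)
      norm_num
      rw [hJI]
      linarith
  · -- q > 1
    have hqm : (0:ℝ) < q - 1 := by linarith
    have ht₀q : (0:ℝ) < t₀ ^ (q-1) := Real.rpow_pos_of_pos ht₀ _
    have hξ0 : (0:ℝ) ≤ 1 + ξ := by linarith
    set A := (1 - 1/q) / q ^ (1/(q-1)) with hAdef
    have hA0 : 0 < A := by
      have h1 : 0 < 1 - 1/q := by
        rw [sub_pos, div_lt_one hq0]; exact hq1
      have h2 : (0:ℝ) < q ^ (1/(q-1)) := Real.rpow_pos_of_pos hq0 _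
      exact div_pos h1 h2
    have hsub1q : (1:ℝ) - 1/q = (q-1)/q := by field_simp
    have hmulq : ((1:ℝ) - 1/q) * q = q - 1 := by field_simp
    have hqq : q ^ q = q ^ (q-1) * q := by
      have h3 := Real.rpow_add hq0 (q-1) 1
      rw [Real.rpow_one] at h3
      rw [← h3]; ring_nf
    have hAq : A ^ (q-1) = (q-1)^(q-1) / q^q := by
      rw [hAdef, Real.div_rpow (by linarith [hsub1q, div_pos hqm hq0] : (0:ℝ) ≤ 1 - 1/q)
          (le_of_lt (Real.rpow_pos_of_pos hq0 _)),
        ← Real.rpow_mul (le_of_lt hq0), one_div_mul_cancel (ne_of_gt hqm), Real.rpow_one,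
        hsub1q, Real.div_rpow hqm0 (le_of_lt hq0), div_div, ← hqq]
    have hu0 : 0 ≤ t₀ * c := mul_nonneg ht₀' hc0
    have huS : t₀ * c ≤ S := le_trans htc hI₀S
    have hamgm := amgm_aux hq1 hu0 huS
    have hckey : T ≤ A^(q-1) / t₀^(q-1) * S^q := by
      have e1 : c^(q-1) * (S - I₀) ≤ c^(q-1) * (S - t₀*c) :=
        mul_le_mul_of_nonneg_left (by linarith) (Real.rpow_nonneg hc0 _)
      have e2 : c^(q-1) = (t₀*c)^(q-1) / t₀^(q-1) := by
        rw [Real.mul_rpow ht₀' hc0, mul_comm, mul_div_assoc, div_self (ne_of_gt ht₀q), mul_one]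
      have e3 : c^(q-1) * (S - t₀*c) ≤ (q-1)^(q-1)/q^q * S^q / t₀^(q-1) := by
        rw [e2, div_mul_eq_mul_div]
        exact (div_le_div_iff_of_pos_right ht₀q).2 hamgm
      calc T ≤ c^(q-1)*(S-I₀) := htail
        _ ≤ c^(q-1)*(S - t₀*c) := e1
        _ ≤ (q-1)^(q-1)/q^q * S^q / t₀^(q-1) := e3
        _ = A^(q-1)/t₀^(q-1) * S^q := by rw [hAq]; ring
    have hSI : S^q ≤ (1+ξ)^q * I₀^q := by
      have h5 := Real.rpow_le_rpow hS0 hhyp (le_of_lt hq0)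
      rwa [Real.mul_rpow hξ0 hI₀0] at h5
    have hTbound : T ≤ (1+ξ)^q * (A^(q-1)/t₀^(q-1)) * I₀^q := by
      calc T ≤ A^(q-1)/t₀^(q-1) * S^q := hckey
        _ ≤ A^(q-1)/t₀^(q-1) * ((1+ξ)^q * I₀^q) :=
            mul_le_mul_of_nonneg_left hSI
              (div_nonneg (Real.rpow_nonneg (le_of_lt hA0) _) (le_of_lt ht₀q))
        _ = (1+ξ)^q * (A^(q-1)/t₀^(q-1)) * I₀^q := by ring
    set R := (1+ξ) * (A/t₀)^(1-1/q) * I₀ with hRdef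
    have hAt0 : (0:ℝ) ≤ A/t₀ := div_nonneg (le_of_lt hA0) ht₀'
    have hR0 : 0 ≤ R :=
      mul_nonneg (mul_nonneg hξ0 (Real.rpow_nonneg hAt0 _)) hI₀0
    have hRq : R^q = (1+ξ)^q * (A^(q-1)/t₀^(q-1)) * I₀^q := by
      rw [hRdef, Real.mul_rpow (mul_nonneg hξ0 (Real.rpow_nonneg hAt0 _)) hI₀0,
        Real.mul_rpow hξ0 (Real.rpow_nonneg hAt0 _),
        ← Real.rpow_mul hAt0, hmulq, Real.div_rpow (le_of_lt hA0) ht₀']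
    have hTRq : T ≤ R^q := by rw [hRq]; exact hTbound
    have claim1 : T^(1/q) ≤ R := by
      have h4 := Real.rpow_le_rpow hT0 hTRq (by positivity : (0:ℝ) ≤ 1/q)
      rwa [← Real.rpow_mul hR0, mul_one_div, div_self (ne_of_gt hq0), Real.rpow_one] at h4
    -- Hölder
    have hconj : Real.HolderConjugate q (q/(q-1)) := Real.HolderConjugate.conjExponent hq1
    haveI hfinm : IsFiniteMeasure (volume.restrict (Set.Ioc (0:ℝ) t₀)) := by
      constructor
      rw [Measure.restrict_apply_univ, Real.volume_Ioc]
      exact ENNReal.ofReal_lt_top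
    have hmeas : AEStronglyMeasurable h (volume.restrict (Set.Ioc (0:ℝ) t₀)) :=
      hintI.1
    have hofq0 : (ENNReal.ofReal q) ≠ 0 := by
      simp only [ne_eq, ENNReal.ofReal_eq_zero, not_le]
      exact hq0
    have hmemf : MemLp h (ENNReal.ofReal q) (volume.restrict (Set.Ioc (0:ℝ) t₀)) := by
      rw [← memLp_norm_rpow_iff hmeas hofq0 ENNReal.ofReal_ne_top,
        ENNReal.div_self hofq0 ENNReal.ofReal_ne_top, ENNReal.toReal_ofReal (le_of_lt hq0),
        memLp_one_iff_integrable]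
      have heq : (fun x => ‖h x‖ ^ q) = fun x => h x ^ q :=
        funext fun x => by rw [Real.norm_of_nonneg (hnonneg x)]
      rw [heq]; exact hintqI
    have hmemg : MemLp (fun _ : ℝ => (1:ℝ)) (ENNReal.ofReal (q/(q-1)))
        (volume.restrict (Set.Ioc (0:ℝ) t₀)) := memLp_const 1
    have hold := integral_mul_le_Lp_mul_Lq_of_nonneg hconj
      (Filter.Eventually.of_forall fun x => hnonneg x)
      (Filter.Eventually.of_forall fun _ => zero_le_one) hmemf hmemg
    simp only [mul_one, Real.one_rpow] at hold
    rw [MeasureTheory.setIntegral_const, Real.volume_real_Ioc, smul_eq_mul, mul_one,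
      max_eq_left (by linarith : (0:ℝ) ≤ t₀ - 0), sub_zero, one_div_div] at hold
    have hold2 : I₀ ≤ J^(1/q) * t₀^((q-1)/q) := hold
    have hI₀q : I₀^q ≤ J * t₀^(q-1) := by
      have h5 := Real.rpow_le_rpow hI₀0 hold2 (le_of_lt hq0)
      rwa [Real.mul_rpow (Real.rpow_nonneg hJ0 _) (Real.rpow_nonneg ht₀' _),
        ← Real.rpow_mul hJ0, ← Real.rpow_mul ht₀',
        one_div_mul_cancel (ne_of_gt hq0), Real.rpow_one,
        show (q-1)/q*q = q-1 by field_simp] at h5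
    have hK0 : 0 ≤ (1+ξ) * A^(1-1/q) :=
      mul_nonneg hξ0 (Real.rpow_nonneg (le_of_lt hA0) _)
    have hKq : ((1+ξ) * A^(1-1/q))^q = (1+ξ)^q * A^(q-1) := by
      rw [Real.mul_rpow hξ0 (Real.rpow_nonneg (le_of_lt hA0) _),
        ← Real.rpow_mul (le_of_lt hA0), hmulq]
    have hTJ : T ≤ ((1+ξ) * A^(1-1/q))^q * J := by
      rw [hKq]
      calc T ≤ (1+ξ)^q * (A^(q-1)/t₀^(q-1)) * I₀^q := hTbound
        _ ≤ (1+ξ)^q * (A^(q-1)/t₀^(q-1)) * (J * t₀^(q-1)) :=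
            mul_le_mul_of_nonneg_left hI₀q
              (mul_nonneg (Real.rpow_nonneg hξ0 _)
                (div_nonneg (Real.rpow_nonneg (le_of_lt hA0) _) (le_of_lt ht₀q)))
        _ = (1+ξ)^q * A^(q-1) * J := by
            field_simp
    have hfin2 := one_add_rpow_le hK0 hq
    constructor
    · exact claim1
    · rw [hSq]
      calc J + T ≤ J + ((1+ξ)*A^(1-1/q))^q * J := by linarith
        _ = (1 + ((1+ξ)*A^(1-1/q))^q) * J := by ring
        _ ≤ (1 + (1+ξ)*A^(1-1/q))^q * J := mul_le_mul_of_nonneg_right hfin2 hJ0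
end

section
/- Let z̃_j = X m̂ where m̂ minimizes m^T Σ̂ m subject to ‖Σ̂ m − e_j‖_∞ ≤ λ''_j, with Σ̂ = X^T X/n and 0 ≤ λ''_j < 1, and suppose z̃_j^T x_j/n = 1 − λ''_j. Let z_j be the solution of the program minimizing ‖z‖₂² over z ∈ ran(X) subject to |z^T x_j/n| = 1 and ‖z^T X_{−j}/n‖_∞ ≤ λ_j with λ_j = λ''_j/(1−λ''_j), normalized so that z_j^T x_j = n. Then z̃_j/(1−λ''_j) is a feasible point of the second program and z̃_j/(1−λ''_j) = z_j, i.e., the two quadratic programs are equivalent up to the scaling factor 1−λ''_j. -/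
open Matrix


private lemma stmt19_dotk {n p : ℕ} (X : Matrix (Fin n) (Fin p) ℝ) (v : Fin p → ℝ) (k : Fin p) :
    (((1 / (n : ℝ)) • (Xᵀ * X)) *ᵥ v) k = dotProduct (X *ᵥ v) (fun i => X i k) / n := by
  simp only [Matrix.mulVec, dotProduct, Matrix.smul_apply, Matrix.mul_apply,
    Matrix.transpose_apply, smul_eq_mul, Finset.sum_mul, Finset.mul_sum, div_eq_mul_inv]
  rw [Finset.sum_comm]
  exact Finset.sum_congr rfl fun i _ => Finset.sum_congr rfl fun l _ => by ring

private lemma stmt19_quad {n p : ℕ} (X : Matrix (Fin n) (Fin p) ℝ) (v : Fin p → ℝ) :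
    dotProduct v (((1 / (n : ℝ)) • (Xᵀ * X)) *ᵥ v) = (∑ i, (X *ᵥ v) i ^ 2) / n := by
  rw [Matrix.smul_mulVec, dotProduct_smul, ← Matrix.mulVec_mulVec,
    Matrix.dotProduct_mulVec, Matrix.vecMul_transpose]
  simp only [dotProduct, sq, div_eq_mul_inv, Finset.sum_mul, smul_eq_mul, Finset.mul_sum]
  exact Finset.sum_congr rfl fun i _ => by ring

/-- equivalence of the two quadratic programs for the score vector.
`z̃_j = X m̂` with `m̂` minimizing `mᵀ Σ̂ m` subject to `‖Σ̂m − e_j‖_∞ ≤ λ''`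
(`Σ̂ = XᵀX/n`), normalized so that `z̃_jᵀ x_j/n = 1 − λ''`; and `z_j` the minimizer of
`‖z‖₂²` over `z ∈ ran X` subject to `|zᵀx_j/n| = 1` and `‖zᵀX_{−j}/n‖_∞ ≤ λ` with
`λ = λ''/(1−λ'')`, normalized so that `z_jᵀ x_j = n`.  Then `z̃_j/(1−λ'')` is feasible
for the second program and `z̃_j/(1−λ'') = z_j`. -/
theorem stmt19 {n m : ℕ} (hn : 0 < n)
    (X : Matrix (Fin n) (Fin (m + 1)) ℝ) (j : Fin (m + 1))
    (lam'' : ℝ) (hlam0 : 0 ≤ lam'') (hlam1 : lam'' < 1)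
    (mhat : Fin (m + 1) → ℝ)
    (hfeas : ∀ k, |(((1 / (n : ℝ)) • (Xᵀ * X)) *ᵥ mhat - (Pi.single j 1 : Fin (m + 1) → ℝ)) k| ≤ lam'')
    (hmin : ∀ m' : Fin (m + 1) → ℝ,
      (∀ k, |(((1 / (n : ℝ)) • (Xᵀ * X)) *ᵥ m' - (Pi.single j 1 : Fin (m + 1) → ℝ)) k| ≤ lam'') →
      dotProduct mhat (((1 / (n : ℝ)) • (Xᵀ * X)) *ᵥ mhat)
        ≤ dotProduct m' (((1 / (n : ℝ)) • (Xᵀ * X)) *ᵥ m'))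
    (hnorm : dotProduct (X *ᵥ mhat) (fun i => X i j) / n = 1 - lam'')
    (z : Fin n → ℝ)
    (hzran : ∃ w, z = X *ᵥ w)
    (hz1 : |dotProduct z (fun i => X i j) / n| = 1)
    (hz2 : ∀ k : Fin m,
      |dotProduct z (fun i => X i (j.succAbove k)) / n| ≤ lam'' / (1 - lam''))
    (hzmin : ∀ z' : Fin n → ℝ, (∃ w, z' = X *ᵥ w) →
      |dotProduct z' (fun i => X i j) / n| = 1 →
      (∀ k : Fin m,
        |dotProduct z' (fun i => X i (j.succAbove k)) / n| ≤ lam'' / (1 - lam'')) →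
      ∑ i, z i ^ 2 ≤ ∑ i, z' i ^ 2)
    (hznorm : dotProduct z (fun i => X i j) = n) :
    (∃ w, (1 - lam'')⁻¹ • (X *ᵥ mhat) = X *ᵥ w) ∧
      |dotProduct ((1 - lam'')⁻¹ • (X *ᵥ mhat)) (fun i => X i j) / n| = 1 ∧
      (∀ k : Fin m,
        |dotProduct ((1 - lam'')⁻¹ • (X *ᵥ mhat)) (fun i => X i (j.succAbove k)) / n|
          ≤ lam'' / (1 - lam'')) ∧
      (1 - lam'')⁻¹ • (X *ᵥ mhat) = z := by

  have hnR : (0:ℝ) < n := Nat.cast_pos.mpr hn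
  have hc : (0:ℝ) < 1 - lam'' := by linarith
  -- feasibility of mhat, translated to dot products
  have hfk : ∀ k : Fin m,
      |dotProduct (X *ᵥ mhat) (fun i => X i (j.succAbove k)) / n| ≤ lam'' := by
    intro k
    have h := hfeas (j.succAbove k)
    rwa [Pi.sub_apply, stmt19_dotk, Pi.single_eq_of_ne (Fin.succAbove_ne j k), sub_zero] at h
  -- the three easy goals
  have g1 : ∃ w, (1 - lam'')⁻¹ • (X *ᵥ mhat) = X *ᵥ w :=
    ⟨(1 - lam'')⁻¹ • mhat, by rw [Matrix.mulVec_smul]⟩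
  have g2 : |dotProduct ((1 - lam'')⁻¹ • (X *ᵥ mhat)) (fun i => X i j) / n| = 1 := by
    rw [smul_dotProduct, smul_eq_mul, mul_div_assoc, hnorm,
      inv_mul_cancel₀ (ne_of_gt hc), abs_one]
  have g3 : ∀ k : Fin m,
      |dotProduct ((1 - lam'')⁻¹ • (X *ᵥ mhat)) (fun i => X i (j.succAbove k)) / n|
        ≤ lam'' / (1 - lam'') := by
    intro k
    rw [smul_dotProduct, smul_eq_mul, mul_div_assoc, abs_mul,
      abs_of_pos (inv_pos.mpr hc), div_eq_inv_mul lam'']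
    exact mul_le_mul_of_nonneg_left (hfk k) (le_of_lt (inv_pos.mpr hc))
  -- minimality of u := (1-lam'')⁻¹ • z̃ for the second program
  have humin : ∀ z' : Fin n → ℝ, (∃ w, z' = X *ᵥ w) →
      |dotProduct z' (fun i => X i j) / n| = 1 →
      (∀ k : Fin m,
        |dotProduct z' (fun i => X i (j.succAbove k)) / n| ≤ lam'' / (1 - lam'')) →
      ∑ i, ((1 - lam'')⁻¹ • (X *ᵥ mhat)) i ^ 2 ≤ ∑ i, z' i ^ 2 := by
    rintro z' ⟨w', rfl⟩ h1 h2
    set d : ℝ := dotProduct (X *ᵥ w') (fun i => X i j) / n with hd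
    have hdd : d * d = 1 := by rw [← abs_mul_abs_self d, h1]; ring
    set m' : Fin (m+1) → ℝ := ((1 - lam'') * d) • w' with hm'
    have hXm' : X *ᵥ m' = ((1 - lam'') * d) • (X *ᵥ w') := by rw [hm', Matrix.mulVec_smul]
    have hfeas' : ∀ k, |(((1 / (n : ℝ)) • (Xᵀ * X)) *ᵥ m'
        - (Pi.single j 1 : Fin (m + 1) → ℝ)) k| ≤ lam'' := by
      intro k
      rw [Pi.sub_apply, stmt19_dotk, hXm', smul_dotProduct, smul_eq_mul, mul_div_assoc]
      by_cases hk : k = j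
      · subst hk
        rw [Pi.single_eq_same, ← hd]
        have : (1 - lam'') * d * d - 1 = -lam'' := by
          rw [mul_assoc, hdd]; ring
        rw [this, abs_neg, abs_of_nonneg hlam0]
      · obtain ⟨k', hk'⟩ := Fin.exists_succAbove_eq hk
        rw [Pi.single_eq_of_ne hk, sub_zero, abs_mul, abs_mul, h1, mul_one,
          abs_of_pos hc]
        calc (1 - lam'') * |dotProduct (X *ᵥ w') (fun i => X i k) / ↑n|
            ≤ (1 - lam'') * (lam'' / (1 - lam'')) := by
              apply mul_le_mul_of_nonneg_left _ (le_of_lt hc)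
              rw [← hk']; exact h2 k'
          _ = lam'' := by field_simp
    have hkey := hmin m' hfeas'
    rw [stmt19_quad, stmt19_quad, hXm'] at hkey
    have hsum' : ∑ i, (((1 - lam'') * d) • (X *ᵥ w')) i ^ 2
        = (1 - lam'')^2 * ∑ i, (X *ᵥ w') i ^ 2 := by
      rw [Finset.mul_sum]
      refine Finset.sum_congr rfl fun i _ => ?_
      simp only [Pi.smul_apply, smul_eq_mul]
      have : ((1 - lam'') * d * (X *ᵥ w') i)^2
          = (1 - lam'')^2 * (d * d) * ((X *ᵥ w') i)^2 := by ring
      rw [this, hdd, mul_one]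
    rw [hsum'] at hkey
    have hbase : ∑ i, (X *ᵥ mhat) i ^ 2 ≤ (1 - lam'')^2 * ∑ i, (X *ᵥ w') i ^ 2 := by
      have := (div_le_div_iff_of_pos_right hnR).mp hkey
      linarith [this]
    have hsumu : ∑ i, ((1 - lam'')⁻¹ • (X *ᵥ mhat)) i ^ 2
        = (1 - lam'')⁻¹^2 * ∑ i, (X *ᵥ mhat) i ^ 2 := by
      rw [Finset.mul_sum]
      exact Finset.sum_congr rfl fun i _ => by
        simp only [Pi.smul_apply, smul_eq_mul]; ring
    rw [hsumu]
    calc (1 - lam'')⁻¹^2 * ∑ i, (X *ᵥ mhat) i ^ 2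
        ≤ (1 - lam'')⁻¹^2 * ((1 - lam'')^2 * ∑ i, (X *ᵥ w') i ^ 2) := by
          apply mul_le_mul_of_nonneg_left hbase
          positivity
      _ = ∑ i, (X *ᵥ w') i ^ 2 := by
          rw [← mul_assoc, ← mul_pow, inv_mul_cancel₀ (ne_of_gt hc), one_pow, one_mul]
  -- equality of minimum values
  have hA : ∑ i, ((1 - lam'')⁻¹ • (X *ᵥ mhat)) i ^ 2 ≤ ∑ i, z i ^ 2 :=
    humin z hzran hz1 hz2
  have hB : ∑ i, z i ^ 2 ≤ ∑ i, ((1 - lam'')⁻¹ • (X *ᵥ mhat)) i ^ 2 :=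
    hzmin _ g1 g2 g3
  -- the midpoint argument
  set u : Fin n → ℝ := (1 - lam'')⁻¹ • (X *ᵥ mhat) with hu
  set w : Fin n → ℝ := fun i => (u i + z i) / 2 with hw
  obtain ⟨wz, hwz⟩ := hzran
  have hudotj : dotProduct u (fun i => X i j) = n := by
    rw [hu, smul_dotProduct, smul_eq_mul]
    have : dotProduct (X *ᵥ mhat) (fun i => X i j) = (1 - lam'') * n := by
      field_simp at hnorm ⊢
      linarith [hnorm]
    rw [this, ← mul_assoc, inv_mul_cancel₀ (ne_of_gt hc), one_mul]
  have hwran : ∃ w', w = X *ᵥ w' := by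
    refine ⟨(2:ℝ)⁻¹ • ((1 - lam'')⁻¹ • mhat + wz), ?_⟩
    funext i
    rw [hw]
    simp only [Matrix.mulVec_smul, Matrix.mulVec_add, Matrix.mulVec_smul, Pi.smul_apply,
      Pi.add_apply, smul_eq_mul]
    rw [hu, hwz]
    simp only [Pi.smul_apply, smul_eq_mul]
    ring
  have hwdot : ∀ v : Fin n → ℝ,
      dotProduct w v = (dotProduct u v + dotProduct z v) / 2 := by
    intro v
    simp only [dotProduct, hw]
    rw [← Finset.sum_add_distrib, Finset.sum_div]
    exact Finset.sum_congr rfl fun i _ => by ring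
  have hw1 : |dotProduct w (fun i => X i j) / n| = 1 := by
    rw [hwdot, hudotj, hznorm]
    have h2 : ((n:ℝ) + n) / 2 / n = 1 := by field_simp; norm_num
    rw [h2, abs_one]
  have hw2 : ∀ k : Fin m,
      |dotProduct w (fun i => X i (j.succAbove k)) / n| ≤ lam'' / (1 - lam'') := by
    intro k
    rw [hwdot]
    have hre : (dotProduct u (fun i => X i (j.succAbove k))
          + dotProduct z (fun i => X i (j.succAbove k))) / 2 / n
        = (dotProduct u (fun i => X i (j.succAbove k)) / n
          + dotProduct z (fun i => X i (j.succAbove k)) / n) / 2 := by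
      ring
    rw [hre]
    set a := dotProduct u (fun i => X i (j.succAbove k)) / n
    set b := dotProduct z (fun i => X i (j.succAbove k)) / n
    have h1 : |(a + b) / 2| = |a + b| / 2 := by rw [abs_div, abs_two]
    have h2 : |a + b| ≤ |a| + |b| := abs_add_le a b
    have h3 : |a| ≤ lam'' / (1 - lam'') := g3 k
    have h4 : |b| ≤ lam'' / (1 - lam'') := hz2 k
    rw [h1]
    linarith
  have hC : ∑ i, z i ^ 2 ≤ ∑ i, w i ^ 2 := hzmin w hwran hw1 hw2
  have hM : ∑ i, u i ^ 2 = ∑ i, z i ^ 2 := le_antisymm hA hB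
  have hzero : ∑ i, (u i - z i) ^ 2 ≤ 0 := by
    have hid : ∑ i, (u i - z i) ^ 2
        = 2 * ∑ i, u i ^ 2 + 2 * ∑ i, z i ^ 2 - 4 * ∑ i, w i ^ 2 := by
      rw [Finset.mul_sum, Finset.mul_sum, Finset.mul_sum, ← Finset.sum_add_distrib,
        ← Finset.sum_sub_distrib]
      refine Finset.sum_congr rfl fun i _ => ?_
      rw [hw]; ring
    rw [hid, hM]
    linarith
  have : ∀ i, (u i - z i) ^ 2 = 0 := by
    intro i
    have hnn : ∀ i ∈ Finset.univ, (0:ℝ) ≤ (u i - z i)^2 := fun i _ => sq_nonneg _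
    have := (Finset.sum_eq_zero_iff_of_nonneg hnn).mp
      (le_antisymm hzero (Finset.sum_nonneg hnn))
    exact this i (Finset.mem_univ i)
  refine ⟨g1, g2, g3, funext fun i => ?_⟩
  have := this i
  have h0 : u i - z i = 0 := by
    exact pow_eq_zero_iff (by norm_num) |>.mp this
  show u i = z i
  linarith
end
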